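/- arXiv:0801.3257 — 8 statements merged into one kernel-verified Lean document; each statement's English description precedes it below -/
import Mathlib

section
/- Let (Ω, μ) be a σ-finite measure space and K : Ω × Ω → ℝ a measurable kernel such that the quantity |K|² := ess-sup over y of ∫∫ |K(x,y')| |K(x,y)| μ(dy') μ(dx) is finite. Then for every f ∈ L²(μ), the function K f(x) = ∫ K(x,y) f(y) μ(dy) is defined for μ-almost every x, lies in L²(μ), and satisfies ‖K f‖₂ ≤ |K| ‖f‖₂; in particular f ↦ Kf is a bounded operator on L²(μ) with operator norm at most |K|. -/
open MeasureTheory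
open scoped ENNReal NNReal

lemma aux_two_mul_le_sq (a b : ℝ≥0∞) : 2 * (a * b) ≤ a ^ 2 + b ^ 2 := by
  induction a using ENNReal.recTopCoe with
  | top =>
    rcases eq_or_ne b 0 with rfl | hb
    · simp
    · simp [ENNReal.top_mul hb, ENNReal.top_pow]
  | coe a =>
    induction b using ENNReal.recTopCoe with
    | top =>
      have : ((⊤:ℝ≥0∞)) ^ (2:ℕ) = ⊤ := by simp [ENNReal.top_pow]
      simp [this]
    | coe b =>
      have h := two_mul_le_add_sq (a:ℝ≥0) b
      rw [← mul_assoc]; exact_mod_cast h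

set_option maxHeartbeats 1000000 in
lemma schur_aux {Ω : Type*} [MeasurableSpace Ω] (μ : Measure Ω) [SigmaFinite μ]
    (k : Ω → Ω → ℝ≥0∞) (hk : Measurable (Function.uncurry k))
    (a : Ω → ℝ≥0∞) (ha : Measurable a) :
    ∫⁻ x, (∫⁻ y, k x y * a y ∂μ) ^ 2 ∂μ
      ≤ essSup (fun y => ∫⁻ x, ∫⁻ y', k x y' * k x y ∂μ ∂μ) μ * ∫⁻ y, a y ^ 2 ∂μ := by
  set B := essSup (fun y => ∫⁻ x, ∫⁻ y', k x y' * k x y ∂μ ∂μ) μ with hB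
  set A := ∫⁻ y, a y ^ 2 ∂μ with hA
  have hky : ∀ x, Measurable (k x) := fun x => hk.comp measurable_prodMk_left
  have hky' : ∀ y, Measurable fun x => k x y := fun y => hk.comp measurable_prodMk_right
  -- the symmetric kernel D
  have hDm : Measurable fun p : Ω × Ω => ∫⁻ x, k x p.1 * k x p.2 ∂μ := by
    apply Measurable.lintegral_prod_right'
      (f := fun q : (Ω × Ω) × Ω => k q.2 q.1.1 * k q.2 q.1.2)
    exact (hk.comp (measurable_snd.prodMk measurable_fst.fst)).mul
      (hk.comp (measurable_snd.prodMk measurable_fst.snd))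
  have hDy : ∀ y, Measurable fun y' => ∫⁻ x, k x y * k x y' ∂μ :=
    fun y => hDm.comp measurable_prodMk_left
  have hDy' : ∀ y', Measurable fun y => ∫⁻ x, k x y * k x y' ∂μ :=
    fun y' => hDm.comp measurable_prodMk_right
  -- step 1 : rewrite the square as a triple integral
  have hS : ∫⁻ x, (∫⁻ y, k x y * a y ∂μ) ^ 2 ∂μ
      = ∫⁻ y, ∫⁻ y', (a y * a y') * ∫⁻ x, k x y * k x y' ∂μ ∂μ ∂μ := by
    have step1 : ∀ x, (∫⁻ y, k x y * a y ∂μ) ^ 2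
        = ∫⁻ y, ∫⁻ y', (a y * a y') * (k x y * k x y') ∂μ ∂μ := by
      intro x
      rw [sq, ← lintegral_lintegral_mul (f := fun y => k x y * a y) (g := fun y => k x y * a y) ((hky x).mul ha).aemeasurable
        ((hky x).mul ha).aemeasurable]
      refine lintegral_congr fun y => lintegral_congr fun y' => by ring
    have hGm : Measurable fun p : Ω × Ω =>
        ∫⁻ y', (a p.2 * a y') * (k p.1 p.2 * k p.1 y') ∂μ := by
      apply Measurable.lintegral_prod_right'
        (f := fun q : (Ω × Ω) × Ω => (a q.1.2 * a q.2) * (k q.1.1 q.1.2 * k q.1.1 q.2))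
      exact ((ha.comp measurable_fst.snd).mul (ha.comp measurable_snd)).mul
        ((hk.comp (measurable_fst.fst.prodMk measurable_fst.snd)).mul
          (hk.comp (measurable_fst.fst.prodMk measurable_snd)))
    calc ∫⁻ x, (∫⁻ y, k x y * a y ∂μ) ^ 2 ∂μ
        = ∫⁻ x, ∫⁻ y, ∫⁻ y', (a y * a y') * (k x y * k x y') ∂μ ∂μ ∂μ :=
          lintegral_congr fun x => step1 x
      _ = ∫⁻ y, ∫⁻ x, ∫⁻ y', (a y * a y') * (k x y * k x y') ∂μ ∂μ ∂μ :=
          lintegral_lintegral_swap hGm.aemeasurable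
      _ = ∫⁻ y, ∫⁻ y', ∫⁻ x, (a y * a y') * (k x y * k x y') ∂μ ∂μ ∂μ := by
          refine lintegral_congr fun y => lintegral_lintegral_swap ?_
          exact (((measurable_const.mul (ha.comp measurable_snd))).mul
            ((hk.comp (measurable_fst.prodMk measurable_const)).mul hk)).aemeasurable
      _ = ∫⁻ y, ∫⁻ y', (a y * a y') * ∫⁻ x, k x y * k x y' ∂μ ∂μ ∂μ :=
          lintegral_congr fun y => lintegral_congr fun y' =>
            lintegral_const_mul _ ((hky' y).mul (hky' y'))
  -- a.e. bounds from the essential supremum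
  have hT1 : ∀ᵐ y ∂μ, (∫⁻ y', ∫⁻ x, k x y * k x y' ∂μ ∂μ) ≤ B := by
    refine (ENNReal.ae_le_essSup (fun y => ∫⁻ x, ∫⁻ y', k x y' * k x y ∂μ ∂μ)).mono fun y hy => ?_
    calc ∫⁻ y', ∫⁻ x, k x y * k x y' ∂μ ∂μ
        = ∫⁻ x, ∫⁻ y', k x y * k x y' ∂μ ∂μ :=
          (lintegral_lintegral_swap (((hk.comp
            (measurable_fst.prodMk measurable_const)).mul hk).aemeasurable)).symm
      _ = ∫⁻ x, ∫⁻ y', k x y' * k x y ∂μ ∂μ := by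
          refine lintegral_congr fun x => lintegral_congr fun y' => mul_comm _ _
      _ ≤ B := hy
  have hT2 : ∀ᵐ y' ∂μ, (∫⁻ y, ∫⁻ x, k x y * k x y' ∂μ ∂μ) ≤ B := by
    refine (ENNReal.ae_le_essSup (fun y => ∫⁻ x, ∫⁻ y', k x y' * k x y ∂μ ∂μ)).mono fun y' hy' => ?_
    calc ∫⁻ y, ∫⁻ x, k x y * k x y' ∂μ ∂μ
        = ∫⁻ x, ∫⁻ y, k x y * k x y' ∂μ ∂μ :=
          (lintegral_lintegral_swap ((hk.mul (hk.comp
            (measurable_fst.prodMk measurable_const))).aemeasurable)).symm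
      _ ≤ B := hy'
  -- the two half-estimates
  have term1 : ∫⁻ y, ∫⁻ y', a y ^ 2 * ∫⁻ x, k x y * k x y' ∂μ ∂μ ∂μ ≤ B * A := by
    have h1 : ∀ y, ∫⁻ y', a y ^ 2 * ∫⁻ x, k x y * k x y' ∂μ ∂μ
        = a y ^ 2 * ∫⁻ y', ∫⁻ x, k x y * k x y' ∂μ ∂μ :=
      fun y => lintegral_const_mul _ (hDy y)
    calc ∫⁻ y, ∫⁻ y', a y ^ 2 * ∫⁻ x, k x y * k x y' ∂μ ∂μ ∂μ
        = ∫⁻ y, a y ^ 2 * ∫⁻ y', ∫⁻ x, k x y * k x y' ∂μ ∂μ ∂μ :=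
          lintegral_congr h1
      _ ≤ ∫⁻ y, a y ^ 2 * B ∂μ :=
          lintegral_mono_ae (hT1.mono fun y hy => mul_le_mul_right hy _)
      _ = A * B := lintegral_mul_const B (ha.pow_const 2)
      _ = B * A := mul_comm _ _
  have term2 : ∫⁻ y, ∫⁻ y', a y' ^ 2 * ∫⁻ x, k x y * k x y' ∂μ ∂μ ∂μ ≤ B * A := by
    calc ∫⁻ y, ∫⁻ y', a y' ^ 2 * ∫⁻ x, k x y * k x y' ∂μ ∂μ ∂μ
        = ∫⁻ y', ∫⁻ y, a y' ^ 2 * ∫⁻ x, k x y * k x y' ∂μ ∂μ ∂μ :=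
          lintegral_lintegral_swap
            ((show Measurable (Function.uncurry fun y y' => a y' ^ 2 * ∫⁻ x, k x y * k x y' ∂μ) from
              ((ha.comp measurable_snd).pow_const 2).mul hDm).aemeasurable)
      _ = ∫⁻ y', a y' ^ 2 * ∫⁻ y, ∫⁻ x, k x y * k x y' ∂μ ∂μ ∂μ :=
          lintegral_congr fun y' => lintegral_const_mul _ (hDy' y')
      _ ≤ ∫⁻ y', a y' ^ 2 * B ∂μ :=
          lintegral_mono_ae (hT2.mono fun y' hy' => mul_le_mul_right hy' _)
      _ = A * B := lintegral_mul_const B (ha.pow_const 2)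
      _ = B * A := mul_comm _ _
  -- double and combine
  have key : 2 * ∫⁻ x, (∫⁻ y, k x y * a y ∂μ) ^ 2 ∂μ ≤ 2 * (B * A) := by
    rw [hS]
    calc 2 * ∫⁻ y, ∫⁻ y', (a y * a y') * ∫⁻ x, k x y * k x y' ∂μ ∂μ ∂μ
        = ∫⁻ y, 2 * ∫⁻ y', (a y * a y') * ∫⁻ x, k x y * k x y' ∂μ ∂μ ∂μ :=
          (lintegral_const_mul' 2 _ ENNReal.ofNat_ne_top).symm
      _ = ∫⁻ y, ∫⁻ y', 2 * ((a y * a y') * ∫⁻ x, k x y * k x y' ∂μ) ∂μ ∂μ :=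
          lintegral_congr fun y => (lintegral_const_mul' 2 _ ENNReal.ofNat_ne_top).symm
      _ = ∫⁻ y, ∫⁻ y', (2 * (a y * a y')) * ∫⁻ x, k x y * k x y' ∂μ ∂μ ∂μ := by
          simp_rw [mul_assoc]
      _ ≤ ∫⁻ y, ∫⁻ y', (a y ^ 2 + a y' ^ 2) * ∫⁻ x, k x y * k x y' ∂μ ∂μ ∂μ :=
          lintegral_mono fun y => lintegral_mono fun y' =>
            mul_le_mul_left (aux_two_mul_le_sq _ _) _
      _ = ∫⁻ y, ∫⁻ y', (a y ^ 2 * ∫⁻ x, k x y * k x y' ∂μ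
            + a y' ^ 2 * ∫⁻ x, k x y * k x y' ∂μ) ∂μ ∂μ := by
          simp_rw [add_mul]
      _ = ∫⁻ y, ((∫⁻ y', a y ^ 2 * ∫⁻ x, k x y * k x y' ∂μ ∂μ)
            + ∫⁻ y', a y' ^ 2 * ∫⁻ x, k x y * k x y' ∂μ ∂μ) ∂μ :=
          lintegral_congr fun y => lintegral_add_left ((hDy y).const_mul _) _
      _ = (∫⁻ y, ∫⁻ y', a y ^ 2 * ∫⁻ x, k x y * k x y' ∂μ ∂μ ∂μ)
            + ∫⁻ y, ∫⁻ y', a y' ^ 2 * ∫⁻ x, k x y * k x y' ∂μ ∂μ ∂μ := by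
          refine lintegral_add_left ?_ _
          apply Measurable.lintegral_prod_right'
            (f := fun p : Ω × Ω => a p.1 ^ 2 * ∫⁻ x, k x p.1 * k x p.2 ∂μ)
          exact ((ha.comp measurable_fst).pow_const 2).mul hDm
      _ ≤ B * A + B * A := add_le_add term1 term2
      _ = 2 * (B * A) := (two_mul _).symm
  exact (ENNReal.mul_le_mul_iff_right two_ne_zero ENNReal.ofNat_ne_top).mp key

set_option maxHeartbeats 1000000 in
/-- Let `(Ω, μ)` be σ-finite and `K : Ω × Ω → ℝ` a measurable kernel such that
`|K|² := ess-sup_y ∫∫ |K(x,y')| |K(x,y)| μ(dy') μ(dx)` is finite. Then for every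
`f ∈ L²(μ)`, `Kf(x) = ∫ K(x,y) f(y) μ(dy)` is defined for a.e. `x`, lies in `L²(μ)`,
and `‖Kf‖₂ ≤ |K| ‖f‖₂`. -/
theorem kernel_L2_bound_via_TTstar {Ω : Type*} [MeasurableSpace Ω] (μ : Measure Ω)
    [SigmaFinite μ] (K : Ω → Ω → ℝ) (hK : Measurable (Function.uncurry K))
    (B : ℝ≥0∞)
    (hB : B = essSup (fun y =>
      ∫⁻ x, ∫⁻ y', ENNReal.ofReal |K x y'| * ENNReal.ofReal |K x y| ∂μ ∂μ) μ)
    (hBfin : B < ⊤)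
    (f : Ω → ℝ) (hf : MemLp f 2 μ) :
    (∀ᵐ x ∂μ, Integrable (fun y => K x y * f y) μ) ∧
    MemLp (fun x => ∫ y, K x y * f y ∂μ) 2 μ ∧
    eLpNorm (fun x => ∫ y, K x y * f y ∂μ) 2 μ ≤ B ^ (1 / 2 : ℝ) * eLpNorm f 2 μ := by
  obtain ⟨hfm, hf2⟩ := hf
  set g : Ω → ℝ := hfm.mk f with hg_def
  have hg : Measurable g := hfm.measurable_mk
  have hfg : f =ᵐ[μ] g := hfm.ae_eq_mk
  have hsec : ∀ x, (fun y => K x y * f y) =ᵐ[μ] fun y => K x y * g y :=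
    fun x => hfg.mono fun y hy => by simp [hy]
  have hint_eq : (fun x => ∫ y, K x y * f y ∂μ) = fun x => ∫ y, K x y * g y ∂μ :=
    funext fun x => integral_congr_ae (hsec x)
  have hnorm_eq : eLpNorm f 2 μ = eLpNorm g 2 μ := eLpNorm_congr_ae hfg
  have hg2 : eLpNorm g 2 μ < ⊤ := hnorm_eq ▸ hf2
  have hk : Measurable (Function.uncurry fun x y => ENNReal.ofReal |K x y|) :=
    hK.abs.ennreal_ofReal
  have ha : Measurable fun y => ENNReal.ofReal |g y| := hg.abs.ennreal_ofReal
  have key : ∫⁻ x, (∫⁻ y, ENNReal.ofReal |K x y| * ENNReal.ofReal |g y| ∂μ) ^ 2 ∂μ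
      ≤ B * ∫⁻ y, (ENNReal.ofReal |g y|) ^ 2 ∂μ := by
    have h := schur_aux μ (fun x y => ENNReal.ofReal |K x y|) hk _ ha
    rwa [← hB] at h
  have htwo : ((2:ℝ≥0∞)).toReal = (2:ℝ) := by norm_num
  have hgnorm : eLpNorm g 2 μ
      = (∫⁻ y, (ENNReal.ofReal |g y|) ^ 2 ∂μ) ^ (1/2 : ℝ) := by
    rw [eLpNorm_eq_lintegral_rpow_enorm_toReal (by norm_num) ENNReal.ofNat_ne_top, htwo]
    congr 1
    refine lintegral_congr fun y => ?_
    rw [Real.enorm_eq_ofReal_abs, show (2:ℝ) = ((2:ℕ):ℝ) by norm_num,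
      ENNReal.rpow_natCast]
  set A := ∫⁻ y, (ENNReal.ofReal |g y|) ^ 2 ∂μ with hA
  have hA_ne : A ≠ ⊤ := by
    intro h
    rw [hgnorm, h, ENNReal.top_rpow_of_pos (by norm_num : (0:ℝ) < 1/2)] at hg2
    exact absurd hg2 (lt_irrefl _)
  have hF : Measurable fun x => ∫⁻ y, ENNReal.ofReal |K x y| * ENNReal.ofReal |g y| ∂μ := by
    apply Measurable.lintegral_prod_right'
      (f := fun p : Ω × Ω => ENNReal.ofReal |K p.1 p.2| * ENNReal.ofReal |g p.2|)
    exact (hK.abs.ennreal_ofReal).mul (ha.comp measurable_snd)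
  have hS_ne : (∫⁻ x, (∫⁻ y, ENNReal.ofReal |K x y| * ENNReal.ofReal |g y| ∂μ) ^ 2 ∂μ) ≠ ⊤ :=
    (lt_of_le_of_lt key (ENNReal.mul_lt_top hBfin hA_ne.lt_top)).ne
  have hFfin : ∀ᵐ x ∂μ, (∫⁻ y, ENNReal.ofReal |K x y| * ENNReal.ofReal |g y| ∂μ) < ⊤ := by
    have h := ae_lt_top (hF.pow_const 2) hS_ne
    refine h.mono fun x hx => ?_
    rcases eq_or_ne (∫⁻ y, ENNReal.ofReal |K x y| * ENNReal.ofReal |g y| ∂μ) ⊤ with h'|h'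
    · rw [h', ENNReal.top_pow (by norm_num)] at hx
      exact absurd hx (lt_irrefl _)
    · exact h'.lt_top
  have hpt : ∀ x, (∫⁻ y, (‖K x y * g y‖₊ : ℝ≥0∞) ∂μ)
      = ∫⁻ y, ENNReal.ofReal |K x y| * ENNReal.ofReal |g y| ∂μ := by
    intro x
    refine lintegral_congr fun y => ?_
    rw [nnnorm_mul, ENNReal.coe_mul, ← enorm_eq_nnnorm, ← enorm_eq_nnnorm, Real.enorm_eq_ofReal_abs,
      Real.enorm_eq_ofReal_abs]
  have c1 : ∀ᵐ x ∂μ, Integrable (fun y => K x y * g y) μ := by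
    refine hFfin.mono fun x hx => ?_
    refine ⟨((hK.comp measurable_prodMk_left).mul hg).aestronglyMeasurable, ?_⟩
    show (∫⁻ y, (‖K x y * g y‖₊ : ℝ≥0∞) ∂μ) < ⊤
    rw [hpt x]; exact hx
  have hKg_aesm : AEStronglyMeasurable (fun x => ∫ y, K x y * g y ∂μ) μ := by
    have h : StronglyMeasurable fun p : Ω × Ω => K p.1 p.2 * g p.2 :=
      (hK.mul (hg.comp measurable_snd)).stronglyMeasurable
    exact h.integral_prod_right'.aestronglyMeasurable
  have c3g : eLpNorm (fun x => ∫ y, K x y * g y ∂μ) 2 μ ≤ B ^ (1/2:ℝ) * eLpNorm g 2 μ := by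
    calc eLpNorm (fun x => ∫ y, K x y * g y ∂μ) 2 μ
        = (∫⁻ x, (‖∫ y, K x y * g y ∂μ‖₊ : ℝ≥0∞) ^ (2:ℝ) ∂μ) ^ (1/2:ℝ) := by
          rw [eLpNorm_eq_lintegral_rpow_enorm_toReal (by norm_num) ENNReal.ofNat_ne_top, htwo]; rfl
      _ ≤ (∫⁻ x, (∫⁻ y, ENNReal.ofReal |K x y| * ENNReal.ofReal |g y| ∂μ) ^ 2 ∂μ) ^ (1/2:ℝ) := by
          refine ENNReal.rpow_le_rpow ?_ (by norm_num)
          refine lintegral_mono fun x => ?_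
          rw [show (2:ℝ) = ((2:ℕ):ℝ) by norm_num, ENNReal.rpow_natCast]
          refine pow_le_pow_left₀ zero_le ?_ 2
          calc (‖∫ y, K x y * g y ∂μ‖₊ : ℝ≥0∞)
              ≤ ∫⁻ y, (‖K x y * g y‖₊ : ℝ≥0∞) ∂μ := enorm_integral_le_lintegral_enorm _
            _ = _ := hpt x
      _ ≤ (B * A) ^ (1/2:ℝ) := ENNReal.rpow_le_rpow key (by norm_num)
      _ = B ^ (1/2:ℝ) * A ^ (1/2:ℝ) := ENNReal.mul_rpow_of_nonneg _ _ (by norm_num)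
      _ = B ^ (1/2:ℝ) * eLpNorm g 2 μ := by rw [hgnorm]
  have c2 : MemLp (fun x => ∫ y, K x y * g y ∂μ) 2 μ := by
    refine ⟨hKg_aesm, lt_of_le_of_lt c3g ?_⟩
    exact ENNReal.mul_lt_top (ENNReal.rpow_lt_top_of_nonneg (by norm_num) hBfin.ne) hg2
  refine ⟨?_, ?_, ?_⟩
  · filter_upwards [c1] with x hx using (integrable_congr (hsec x)).mpr hx
  · rw [hint_eq]; exact c2
  · rw [hint_eq, hnorm_eq]; exact c3g
end

section
/- For every M ≥ 1 there is a constant c = c(M) such that for all b, γ > 0 with max(γ, γ^{-1}, b, b^{-1}) ≤ M, all t > 0 and all x, y ≥ 0: q_t^{b,γ}(x,y) ≤ c [ t^{-b/γ} + 1_{(b/γ < 1/2)} (min(x,y))^{1/2 − b/γ} t^{-1/2} ]. -/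
section QdensAux
open Real Nat

lemma gamma_step {x : ℝ} (hx : 0 < x) {θ : ℝ} (h0 : 0 ≤ θ) (h1 : θ ≤ 1) :
    Real.Gamma (x + θ) ≤ Real.Gamma x * x ^ θ := by
  have hx1 : (0:ℝ) < x + 1 := by linarith
  have hΓx := Real.Gamma_pos_of_pos hx
  have hΓx1 := Real.Gamma_pos_of_pos hx1
  have hconv := Real.convexOn_log_Gamma
  have hmem : x ∈ Set.Ioi (0:ℝ) := hx
  have hmem1 : x + 1 ∈ Set.Ioi (0:ℝ) := hx1
  have key := hconv.2 hmem hmem1 (by linarith : (0:ℝ) ≤ 1 - θ) h0 (by ring)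
  have hcomb : (1 - θ) • x + θ • (x + 1) = x + θ := by simp [smul_eq_mul]; ring
  rw [hcomb] at key
  simp only [Function.comp_apply, smul_eq_mul] at key
  -- key : log (Γ (x+θ)) ≤ (1-θ) * log (Γ x) + θ * log (Γ (x+1))
  have hrec : Real.Gamma (x + 1) = x * Real.Gamma x := Real.Gamma_add_one (ne_of_gt hx)
  have hΓxθ := Real.Gamma_pos_of_pos (by linarith : (0:ℝ) < x + θ)
  have : Real.Gamma (x + θ) = Real.exp (Real.log (Real.Gamma (x + θ))) :=
    (Real.exp_log hΓxθ).symm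
  rw [this]
  have h2 : (1 - θ) * Real.log (Real.Gamma x) + θ * Real.log (Real.Gamma (x+1))
      = Real.log (Real.Gamma x) + θ * Real.log x := by
    rw [hrec, Real.log_mul (ne_of_gt hx) (ne_of_gt hΓx)]; ring
  calc Real.exp (Real.log (Real.Gamma (x + θ)))
      ≤ Real.exp (Real.log (Real.Gamma x) + θ * Real.log x) := by
        apply Real.exp_le_exp.2; rw [← h2]; exact key
    _ = Real.Gamma x * x ^ θ := by
        rw [Real.exp_add, Real.exp_log hΓx, Real.rpow_def_of_pos hx]
        ring_nf

lemma gamma_lb {x : ℝ} (hx : 1 ≤ x) {ρ : ℝ} (hρ : 0 ≤ ρ) :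
    Real.Gamma x ≤ 2 * Real.Gamma (x + ρ) := by
  have hx0 : (0:ℝ) < x := by linarith
  have key : ∀ n : ℕ, ∀ ρ : ℝ, 0 ≤ ρ → ρ ≤ n + 1 → Real.Gamma x ≤ 2 * Real.Gamma (x + ρ) := by
    intro n
    induction n with
    | zero =>
      intro ρ h0 h1
      push_cast at h1
      have hxρ : (0:ℝ) < x + ρ := by linarith
      have hs := gamma_step hxρ (by linarith : (0:ℝ) ≤ 1 - ρ) (by linarith)
      have he : x + ρ + (1 - ρ) = x + 1 := by ring
      rw [he] at hs
      have hrec : Real.Gamma (x + 1) = x * Real.Gamma x := Real.Gamma_add_one (ne_of_gt hx0)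
      have hpow : (x + ρ) ^ (1 - ρ) ≤ x + 1 := by
        rcases le_or_gt (x + ρ) 1 with h | h
        · calc (x + ρ) ^ (1 - ρ) ≤ 1 := Real.rpow_le_one hxρ.le h (by linarith)
            _ ≤ x + 1 := by linarith
        · calc (x + ρ) ^ (1 - ρ) ≤ (x + ρ) ^ (1:ℝ) :=
              Real.rpow_le_rpow_of_exponent_le h.le (by linarith)
            _ = x + ρ := Real.rpow_one _
            _ ≤ x + 1 := by linarith
      have hΓρ := Real.Gamma_pos_of_pos hxρ
      nlinarith [Real.Gamma_pos_of_pos hx0]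
    | succ n ih =>
      intro ρ h0 h1
      rcases le_or_gt ρ (n + 1 : ℝ) with h | h
      · exact ih ρ h0 (by push_cast; linarith)
      · have h1' : (1:ℝ) ≤ ρ := by
          have : (1:ℝ) ≤ (n:ℝ) + 1 := by have := Nat.cast_nonneg (α:=ℝ) n; linarith
          linarith
        have hrec : Real.Gamma (x + ρ) = (x + ρ - 1) * Real.Gamma (x + ρ - 1) := by
          have : x + ρ = (x + ρ - 1) + 1 := by ring
          rw [this, Real.Gamma_add_one (by intro hc; nlinarith)]
          ring_nf
        have hprev : Real.Gamma x ≤ 2 * Real.Gamma (x + (ρ - 1)) := by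
          apply ih (ρ - 1) (by linarith)
          push_cast at h1 ⊢; linarith
        have he : x + (ρ - 1) = x + ρ - 1 := by ring
        rw [he] at hprev
        have hΓ := Real.Gamma_pos_of_pos (show (0:ℝ) < x + ρ - 1 by linarith)
        nlinarith
  exact key ⌈ρ⌉₊ ρ hρ (by calc ρ ≤ (⌈ρ⌉₊ : ℝ) := Nat.le_ceil ρ
    _ ≤ (⌈ρ⌉₊ : ℝ) + 1 := by linarith)

lemma gamma_ge_half {z : ℝ} (hz : 1 ≤ z) : (1/2 : ℝ) ≤ Real.Gamma z := by
  have := gamma_lb le_rfl (show (0:ℝ) ≤ z - 1 by linarith)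
  rw [Real.Gamma_one] at this
  have he : (1:ℝ) + (z - 1) = z := by ring
  rw [he] at this
  linarith

lemma gamma_half (m : ℕ) :
    Real.Gamma ((m:ℝ) + 1/2) = √π * (2*m)! / (4^m * m !) := by
  induction m with
  | zero => rw [show ((0:ℕ):ℝ) + 1/2 = 1/2 by norm_num, Real.Gamma_one_half_eq]; norm_num
  | succ m ih =>
    have h : ((m:ℝ) + 1) + 1/2 = ((m:ℝ) + 1/2) + 1 := by ring
    have hne : (m:ℝ) + 1/2 ≠ 0 := by positivity
    have hrec := Real.Gamma_add_one hne
    have hfac : ((2*(m+1))! : ℝ) = (2*m)! * ((2*(m:ℝ)+1) * (2*(m:ℝ)+2)) := by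
      have : 2*(m+1) = (2*m+1) + 1 := by ring
      rw [this, Nat.factorial_succ, Nat.factorial_succ]
      push_cast; ring
    push_cast
    rw [h, hrec, ih, Nat.factorial_succ, hfac]
    push_cast
    field_simp
    ring

lemma stirling_lo (k : ℕ) (hk : k ≠ 0) :
    √π * (√(2*(k:ℝ)) * ((k:ℝ)/Real.exp 1)^k) ≤ (k ! : ℝ) := by
  obtain ⟨n, rfl⟩ := Nat.exists_eq_succ_of_ne_zero hk
  have h1 : √π ≤ Stirling.stirlingSeq (n+1) :=
    Stirling.stirlingSeq'_antitone.le_of_tendsto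
      (Stirling.tendsto_stirlingSeq_sqrt_pi.comp (Filter.tendsto_add_atTop_nat 1)) n
  have hD : (0:ℝ) < √(2*((n+1:ℕ):ℝ)) * (((n+1:ℕ):ℝ)/Real.exp 1)^(n+1) := by
    have : (0:ℝ) < ((n+1:ℕ):ℝ) := by positivity
    positivity
  have h := mul_le_mul_of_nonneg_right h1 hD.le
  rw [Stirling.stirlingSeq, div_mul_cancel₀ _ (ne_of_gt hD)] at h
  exact h

lemma stirling_hi (k : ℕ) (hk : k ≠ 0) :
    (k ! : ℝ) ≤ Real.exp 1 / √2 * (√(2*(k:ℝ)) * ((k:ℝ)/Real.exp 1)^k) := by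
  obtain ⟨n, rfl⟩ := Nat.exists_eq_succ_of_ne_zero hk
  have h1 : Stirling.stirlingSeq (n+1) ≤ Real.exp 1 / √2 := by
    have := Stirling.stirlingSeq'_antitone (Nat.zero_le n)
    simpa using this
  have hD : (0:ℝ) < √(2*((n+1:ℕ):ℝ)) * (((n+1:ℕ):ℝ)/Real.exp 1)^(n+1) := by
    have : (0:ℝ) < ((n+1:ℕ):ℝ) := by positivity
    positivity
  have h := mul_le_mul_of_nonneg_right h1 hD.le
  rw [Stirling.stirlingSeq, div_mul_cancel₀ _ (ne_of_gt hD)] at h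
  exact h

lemma ratio_lemma (k : ℕ) (hk : k ≠ 0) :
    ((k:ℝ)/Real.exp 1)^k * 4^k * (k ! : ℝ) ≤ Real.exp 1 / (2*√π) * ((2*k)! : ℝ) := by
  have hk0 : (0:ℝ) < (k:ℝ) := by exact_mod_cast Nat.pos_of_ne_zero hk
  have hπ : (0:ℝ) < √π := Real.sqrt_pos.2 Real.pi_pos
  have hE : (0:ℝ) < Real.exp 1 := Real.exp_pos 1
  set E := Real.exp 1 with hEdef
  set a := ((k:ℝ)/E)^k with hadef
  set r := √(k:ℝ) with hrdef
  have ha : 0 ≤ a := by positivity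
  have hr : 0 ≤ r := Real.sqrt_nonneg _
  have hsq2 : √(2*(k:ℝ)) = √2 * r := Real.sqrt_mul (by norm_num) _
  have hi : (k ! : ℝ) ≤ E * r * a := by
    have := stirling_hi k hk
    rw [hsq2] at this
    calc (k ! : ℝ) ≤ E / √2 * (√2 * r * a) := this
      _ = E * r * a * (√2 / √2) := by ring
      _ = E * r * a := by rw [div_self (by positivity : √(2:ℝ) ≠ 0)]; ring
  have hlo : √π * (2 * r * (4^k * a^2)) ≤ ((2*k)! : ℝ) := by
    have h := stirling_lo (2*k) (by omega)
    have e1 : √(2*((2*k:ℕ):ℝ)) = 2 * r := by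
      push_cast
      rw [show (2:ℝ)*(2*(k:ℝ)) = (2:ℝ)^2 * k by ring, Real.sqrt_mul (by positivity),
        Real.sqrt_sq (by norm_num)]
    have e2 : (((2*k:ℕ):ℝ)/E)^(2*k) = 4^k * a^2 := by
      push_cast
      rw [show (2*(k:ℝ))/E = 2 * ((k:ℝ)/E) by ring, mul_pow, hadef]
      congr 1
      · rw [pow_mul]; norm_num
      · rw [← pow_mul, mul_comm]
    rw [e1, e2] at h
    exact h
  calc ((k:ℝ)/E)^k * 4^k * (k ! : ℝ) = a * 4^k * (k ! : ℝ) := by rw [hadef]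
    _ ≤ a * 4^k * (E * r * a) := by
        apply mul_le_mul_of_nonneg_left hi (by positivity)
    _ = E / (2*√π) * (√π * (2 * r * (4^k * a^2))) := by
        field_simp
    _ ≤ E / (2*√π) * ((2*k)! : ℝ) := by
        apply mul_le_mul_of_nonneg_left hlo (by positivity)

lemma exp_tsum (w : ℝ) : Real.exp w = ∑' n : ℕ, w ^ n / n ! := by
  rw [Real.exp_eq_exp_ℝ, NormedSpace.exp_eq_tsum_div]

lemma pow_exp_le {s : ℝ} (hs : 0 ≤ s) {k : ℕ} (hk : k ≠ 0) :
    s^k * Real.exp (-s) ≤ ((k:ℝ)/Real.exp 1)^k := by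
  have hk0 : (0:ℝ) < (k:ℝ) := by exact_mod_cast Nat.pos_of_ne_zero hk
  have h1 : s / k ≤ Real.exp (s/k - 1) := by
    have := Real.add_one_le_exp (s/k - 1); linarith
  have h2 : (s/k)^k ≤ Real.exp (s - k) := by
    calc (s/k)^k ≤ (Real.exp (s/k - 1))^k := by
          apply pow_le_pow_left₀ (by positivity) h1
      _ = Real.exp ((k:ℝ) * (s/k - 1)) := by rw [← Real.exp_nat_mul]
      _ = Real.exp (s - k) := by
          congr 1; field_simp
  have hs' : s^k = (s/k)^k * (k:ℝ)^k := by
    rw [div_pow]; field_simp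
  calc s^k * Real.exp (-s) = (s/k)^k * (k:ℝ)^k * Real.exp (-s) := by rw [hs']
    _ ≤ Real.exp (s - k) * (k:ℝ)^k * Real.exp (-s) := by
        apply mul_le_mul_of_nonneg_right (mul_le_mul_of_nonneg_right h2 (by positivity))
          (Real.exp_nonneg _)
    _ = (k:ℝ)^k * Real.exp (-(k:ℝ)) := by
        rw [mul_comm (Real.exp (s - (k:ℝ))) ((k:ℝ)^k), mul_assoc, ← Real.exp_add]
        congr 2; ring
    _ = ((k:ℝ)/Real.exp 1)^k := by
        rw [div_pow, ← Real.exp_nat_mul, mul_one, Real.exp_neg]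
        rw [div_eq_mul_inv]

lemma pow_div_fact_le_exp (s : ℝ) (hs : 0 ≤ s) (k : ℕ) : s^k / k ! ≤ Real.exp s := by
  rw [exp_tsum]
  exact Summable.le_tsum (Real.summable_pow_div_factorial s) k
    (fun i _ => by positivity)

lemma pow_exp_le_fact {s : ℝ} (hs : 0 ≤ s) (k : ℕ) : s^k * Real.exp (-s) ≤ (k ! : ℝ) := by
  rcases Nat.eq_zero_or_pos k with rfl | hk
  · simpa using Real.exp_le_one_iff.mpr (by linarith : -s ≤ 0)
  have h1 := pow_exp_le hs (Nat.pos_iff_ne_zero.mp hk)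
  have h2 : ((k:ℝ)/Real.exp 1)^k ≤ (k ! : ℝ) := by
    have h3 := pow_div_fact_le_exp (k:ℝ) (Nat.cast_nonneg k) k
    have hkf : (0:ℝ) < (k ! : ℝ) := by exact_mod_cast Nat.factorial_pos k
    rw [div_le_iff₀ hkf] at h3
    rw [div_pow, ← Real.exp_nat_mul, mul_one, div_le_iff₀ (by positivity)]
    linarith
  linarith

lemma tsum_succ_div_fact (w : ℝ) : ∑' m:ℕ, w^(m+1)/(m+1)! = Real.exp w - 1 := by
  have hs := Real.summable_pow_div_factorial w
  have h := Summable.tsum_eq_zero_add hs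
  rw [← exp_tsum] at h
  simp only [pow_zero, Nat.factorial_zero, Nat.cast_one, div_one] at h
  linarith

lemma summable_succ_div_fact (w : ℝ) : Summable (fun m : ℕ => w^(m+1)/(m+1)!) :=
  (summable_nat_add_iff 1).2 (Real.summable_pow_div_factorial w)

lemma tsum_succ_div_fact' (w : ℝ) : ∑' m:ℕ, w^(m+1)/(m !) = w * Real.exp w := by
  have : ∀ m : ℕ, w^(m+1)/(m !) = w * (w^m / m !) := by
    intro m; rw [pow_succ]; ring
  rw [tsum_congr this, tsum_mul_left, ← exp_tsum]

lemma summable_succ_div_fact' (w : ℝ) : Summable (fun m : ℕ => w^(m+1)/(m !)) := by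
  have : ∀ m : ℕ, w^(m+1)/(m !) = w * (w^m / m !) := by
    intro m; rw [pow_succ]; ring
  simp_rw [this]
  exact (Real.summable_pow_div_factorial w).mul_left w

lemma termbound {ν : ℝ} (hν : 0 < ν) {w s : ℝ} (hw : 0 ≤ w) (hws : w ≤ s) (k : ℕ) (hk : k ≠ 0) :
    Real.exp (-(w+s)) * (1/((k ! : ℝ) * Real.Gamma ((k:ℝ)+ν)) * w^k * s^k)
      ≤ ((k:ℝ)+1) ^ (max (1/2 - ν) 0) * (w^k * Real.exp (-w) / (k ! : ℝ)) := by
  have hs : 0 ≤ s := le_trans hw hws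
  have hk1 : (1:ℝ) ≤ (k:ℝ) := by exact_mod_cast Nat.one_le_iff_ne_zero.mpr hk
  have hΓν : 0 < Real.Gamma ((k:ℝ)+ν) := Real.Gamma_pos_of_pos (by positivity)
  have hπ : (0:ℝ) < √π := Real.sqrt_pos.2 Real.pi_pos
  have hfk : (0:ℝ) < (k ! : ℝ) := by exact_mod_cast Nat.factorial_pos k
  have hf2k : (0:ℝ) < ((2*k)! : ℝ) := by exact_mod_cast Nat.factorial_pos (2*k)
  set B := ((k:ℝ)+1) ^ (max (1/2 - ν) 0) with hBdef
  have hB : 0 < B := Real.rpow_pos_of_pos (by linarith) _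
  -- Gamma comparison
  have hG : Real.Gamma ((k:ℝ)+1/2) ≤ 2 * B * Real.Gamma ((k:ℝ)+ν) := by
    rcases le_or_gt ν (1/2) with hcase | hcase
    · have hmax : max (1/2-ν) 0 = 1/2-ν := max_eq_left (by linarith)
      have hstep := gamma_step (show (0:ℝ) < (k:ℝ)+ν by positivity)
        (show (0:ℝ) ≤ 1/2-ν by linarith) (show 1/2-ν ≤ 1 by linarith)
      have he : (k:ℝ)+ν+(1/2-ν) = (k:ℝ)+1/2 := by ring
      rw [he] at hstep
      have hmono : ((k:ℝ)+ν)^(1/2-ν) ≤ ((k:ℝ)+1)^(1/2-ν) :=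
        Real.rpow_le_rpow (by positivity) (by linarith) (by linarith)
      rw [hBdef, hmax]
      nlinarith [Real.rpow_nonneg (show (0:ℝ) ≤ (k:ℝ)+1 by positivity) (1/2-ν)]
    · have hmax : max (1/2-ν) 0 = 0 := max_eq_right (by linarith)
      rw [hBdef, hmax, Real.rpow_zero]
      have hlb := gamma_lb (show (1:ℝ) ≤ (k:ℝ)+1/2 by linarith)
        (show (0:ℝ) ≤ ν - 1/2 by linarith)
      have he : (k:ℝ)+1/2+(ν-1/2) = (k:ℝ)+ν := by ring
      rw [he] at hlb
      linarith
  -- 1/(k! Γ(k+ν)) ≤ 2 B 4^k / (√π (2k)!)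
  have h6 : 1/((k ! : ℝ) * Real.Gamma ((k:ℝ)+ν)) ≤ 2*B*4^k/(√π*((2*k)! : ℝ)) := by
    rw [gamma_half k] at hG
    rw [div_le_div_iff₀ (by positivity) (by positivity)]
    have h7 : √π * ((2*k)! : ℝ) / (4^k * (k !:ℝ)) * ((k !:ℝ) * (4:ℝ)^k)
        ≤ 2 * B * Real.Gamma ((k:ℝ)+ν) * ((k !:ℝ) * (4:ℝ)^k) :=
      mul_le_mul_of_nonneg_right hG (by positivity)
    have h8 : √π * ((2*k)! : ℝ) / (4^k * (k !:ℝ)) * ((k !:ℝ) * (4:ℝ)^k)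
        = √π * ((2*k)! : ℝ) := by field_simp
    rw [h8] at h7
    nlinarith
  -- combine
  have hre : Real.exp (-(w+s)) * (1/((k ! : ℝ) * Real.Gamma ((k:ℝ)+ν)) * w^k * s^k)
      = (w^k * Real.exp (-w)) * ((s^k * Real.exp (-s)) * (1/((k ! : ℝ) * Real.Gamma ((k:ℝ)+ν)))) := by
    rw [show -(w+s) = -w + -s by ring, Real.exp_add]; ring
  rw [hre]
  have hmid : (s^k * Real.exp (-s)) * (1/((k ! : ℝ) * Real.Gamma ((k:ℝ)+ν)))
      ≤ ((k:ℝ)/Real.exp 1)^k * (2*B*4^k/(√π*((2*k)! : ℝ))) := by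
    apply mul_le_mul (pow_exp_le hs hk) h6 (by positivity) (by positivity)
  have hrat : ((k:ℝ)/Real.exp 1)^k * (2*B*4^k/(√π*((2*k)! : ℝ))) ≤ B * (Real.exp 1/π) / (k !:ℝ) := by
    have h9 := ratio_lemma k hk
    -- (k/e)^k * 4^k ≤ e (2k)!/(2 √π k!)
    have h10 : ((k:ℝ)/Real.exp 1)^k * 4^k ≤ Real.exp 1 * ((2*k)!:ℝ)/(2*√π*(k !:ℝ)) := by
      rw [le_div_iff₀ (by positivity)]
      calc ((k:ℝ)/Real.exp 1)^k * 4^k * (2*√π*(k !:ℝ))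
          = (((k:ℝ)/Real.exp 1)^k * 4^k * (k !:ℝ)) * (2*√π) := by ring
        _ ≤ Real.exp 1 / (2*√π) * ((2*k)! : ℝ) * (2*√π) :=
            mul_le_mul_of_nonneg_right h9 (by positivity)
        _ = Real.exp 1 * ((2*k)!:ℝ) := by field_simp
    calc ((k:ℝ)/Real.exp 1)^k * (2*B*4^k/(√π*((2*k)! : ℝ)))
        = (((k:ℝ)/Real.exp 1)^k * 4^k) * (2*B/(√π*((2*k)! : ℝ))) := by ring
      _ ≤ (Real.exp 1 * ((2*k)!:ℝ)/(2*√π*(k !:ℝ))) * (2*B/(√π*((2*k)! : ℝ))) :=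
          mul_le_mul_of_nonneg_right h10 (by positivity)
      _ = B * (Real.exp 1/π) / (k !:ℝ) := by
          have hpp : √π * √π = π := Real.mul_self_sqrt Real.pi_pos.le
          field_simp
          linear_combination (-1 : ℝ) * hpp
  have heπ : Real.exp 1 / π ≤ 1 := by
    have h1 := Real.exp_one_lt_d9
    have h2 := Real.pi_gt_three
    rw [div_le_one Real.pi_pos]
    linarith
  calc (w^k * Real.exp (-w)) * ((s^k * Real.exp (-s)) * (1/((k ! : ℝ) * Real.Gamma ((k:ℝ)+ν))))
      ≤ (w^k * Real.exp (-w)) * (B * (Real.exp 1/π) / (k !:ℝ)) :=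
        mul_le_mul_of_nonneg_left (le_trans hmid hrat) (by positivity)
    _ ≤ (w^k * Real.exp (-w)) * (B * 1 / (k !:ℝ)) := by
        gcongr
    _ = B * (w^k * Real.exp (-w) / (k !:ℝ)) := by ring

lemma gamma_fact_le {ν : ℝ} (hν : 0 < ν) (m : ℕ) :
    (m ! : ℝ) * Real.Gamma (ν+1) ≤ Real.Gamma (((m:ℝ)+1)+ν) := by
  induction m with
  | zero =>
    simp only [Nat.cast_zero, Nat.factorial_zero, Nat.cast_one, one_mul, zero_add]
    rw [show (1:ℝ)+ν = ν+1 by ring]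
  | succ m ih =>
    have hrec : Real.Gamma ((((m:ℕ):ℝ)+1)+1+ν) = (((m:ℝ)+1)+ν) * Real.Gamma (((m:ℝ)+1)+ν) := by
      rw [show ((m:ℝ)+1)+1+ν = (((m:ℝ)+1)+ν)+1 by ring]
      exact Real.Gamma_add_one (by positivity)
    have hm1 : (0:ℝ) ≤ (m:ℝ) := Nat.cast_nonneg m
    have hΓ := Real.Gamma_pos_of_pos (show (0:ℝ) < ((m:ℝ)+1)+ν by positivity)
    have hΓν1 := Real.Gamma_pos_of_pos (show (0:ℝ) < ν+1 by positivity)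
    have hfm : (0:ℝ) < (m ! :ℝ) := by exact_mod_cast Nat.factorial_pos m
    calc ((m+1)! : ℝ) * Real.Gamma (ν+1) = ((m:ℝ)+1) * ((m ! :ℝ) * Real.Gamma (ν+1)) := by
          rw [Nat.factorial_succ]; push_cast; ring
      _ ≤ ((m:ℝ)+1) * Real.Gamma (((m:ℝ)+1)+ν) := by
          apply mul_le_mul_of_nonneg_left ih (by positivity)
      _ ≤ (((m:ℝ)+1)+ν) * Real.Gamma (((m:ℝ)+1)+ν) := by nlinarith
      _ = Real.Gamma ((((m+1:ℕ)):ℝ)+1+ν) := by push_cast; rw [hrec]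
    
lemma termbound_lin {ν : ℝ} (hν : 0 < ν) {w s : ℝ} (hw : 0 ≤ w) (hws : w ≤ s) (m : ℕ) :
    Real.exp (-(w+s)) * (1/(((m+1)! : ℝ) * Real.Gamma (((m:ℝ)+1)+ν)) * w^(m+1) * s^(m+1))
      ≤ 2 * Real.exp (-w) * (w^(m+1)/(m ! : ℝ)) := by
  have hs : 0 ≤ s := le_trans hw hws
  have hΓ := Real.Gamma_pos_of_pos (show (0:ℝ) < ((m:ℝ)+1)+ν by positivity)
  have hfm : (0:ℝ) < (m ! :ℝ) := by exact_mod_cast Nat.factorial_pos m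
  have hfm1 : (0:ℝ) < ((m+1)! :ℝ) := by exact_mod_cast Nat.factorial_pos (m+1)
  have hΓhalf : (m ! : ℝ) * (1/2) ≤ Real.Gamma (((m:ℝ)+1)+ν) := by
    have h1 := gamma_fact_le hν m
    have h2 : (1:ℝ)/2 ≤ Real.Gamma (ν+1) := gamma_ge_half (by linarith)
    nlinarith
  have hfs : s^(m+1) * Real.exp (-s) ≤ ((m+1)! : ℝ) := pow_exp_le_fact hs (m+1)
  have key : (s^(m+1) * Real.exp (-s)) * (1/(((m+1)! : ℝ) * Real.Gamma (((m:ℝ)+1)+ν)))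
      ≤ 2/(m ! : ℝ) := by
    have h3 : ((m+1)! : ℝ) * ((m ! : ℝ) * (1/2)) ≤ ((m+1)! : ℝ) * Real.Gamma (((m:ℝ)+1)+ν) :=
      mul_le_mul_of_nonneg_left hΓhalf hfm1.le
    have h4 : 1/(((m+1)! : ℝ) * Real.Gamma (((m:ℝ)+1)+ν)) ≤ 1/(((m+1)! : ℝ) * ((m ! : ℝ) * (1/2))) :=
      one_div_le_one_div_of_le (by positivity) h3
    calc (s^(m+1) * Real.exp (-s)) * (1/(((m+1)! : ℝ) * Real.Gamma (((m:ℝ)+1)+ν)))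
        ≤ ((m+1)! : ℝ) * (1/(((m+1)! : ℝ) * ((m ! : ℝ) * (1/2)))) := by
          apply mul_le_mul hfs h4 (by positivity) hfm1.le
      _ = 2/(m ! : ℝ) := by field_simp
  calc Real.exp (-(w+s)) * (1/(((m+1)! : ℝ) * Real.Gamma (((m:ℝ)+1)+ν)) * w^(m+1) * s^(m+1))
      = (w^(m+1) * Real.exp (-w)) *
        ((s^(m+1) * Real.exp (-s)) * (1/(((m+1)! : ℝ) * Real.Gamma (((m:ℝ)+1)+ν)))) := by
        rw [show -(w+s) = -w + -s by ring, Real.exp_add]; ring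
    _ ≤ (w^(m+1) * Real.exp (-w)) * (2/(m ! : ℝ)) := by
        apply mul_le_mul_of_nonneg_left key (by positivity)
    _ = 2 * Real.exp (-w) * (w^(m+1)/(m ! : ℝ)) := by ring
lemma core {ν u v : ℝ} (hν : 0 < ν) (hu : 0 ≤ u) (hv : 0 ≤ v) :
    Real.exp (-(u+v)) * ∑' m : ℕ, 1 / ((m ! : ℝ) * Real.Gamma ((m:ℝ) + ν)) * u^m * v^m
      ≤ (2*ν + 2) + (if ν < 1/2 then 3 * (min u v) ^ ((1:ℝ)/2 - ν) else 0) := by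
  set w := min u v with hwdef
  set s := max u v with hsdef
  have hw : 0 ≤ w := le_min hu hv
  have hws : w ≤ s := min_le_max
  have hs : 0 ≤ s := le_trans hw hws
  have hprod : ∀ m : ℕ, u^m * v^m = w^m * s^m := fun m => by
    rw [← mul_pow, ← mul_pow, min_mul_max]
  have hsum : u + v = w + s := (min_add_max u v).symm
  set G : ℕ → ℝ := fun m => Real.exp (-(w+s)) * (1 / ((m ! : ℝ) * Real.Gamma ((m:ℝ) + ν)) * w^m * s^m)
    with hGdef
  have hΓpos : ∀ m : ℕ, 0 < Real.Gamma ((m:ℝ) + ν) := fun m =>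
    Real.Gamma_pos_of_pos (by positivity)
  have hGnonneg : ∀ m, 0 ≤ G m := by
    intro m
    have := (hΓpos m).le
    have hf : (0:ℝ) < (m ! : ℝ) := by exact_mod_cast Nat.factorial_pos m
    have h1 : (0:ℝ) ≤ 1 / ((m ! : ℝ) * Real.Gamma ((m:ℝ) + ν)) := by positivity
    simp only [hGdef]
    positivity
  have hLHS : Real.exp (-(u+v)) * ∑' m : ℕ, 1 / ((m ! : ℝ) * Real.Gamma ((m:ℝ) + ν)) * u^m * v^m
      = ∑' m, G m := by
    rw [hsum, ← tsum_mul_left]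
    apply tsum_congr
    intro m
    simp only [hGdef]
    rw [mul_assoc (1 / ((m ! : ℝ) * Real.Gamma ((m:ℝ) + ν))), hprod m]
    ring
  rw [hLHS]
  -- the m = 0 term
  have hG0 : G 0 ≤ 2 * ν := by
    have h1 : Real.exp (-(w+s)) ≤ 1 := Real.exp_le_one_iff.mpr (by linarith)
    have h2 : (1:ℝ)/2 ≤ ν * Real.Gamma ν := by
      have := gamma_ge_half (show (1:ℝ) ≤ ν + 1 by linarith)
      rwa [Real.Gamma_add_one (ne_of_gt hν)] at this
    have hΓν : 0 < Real.Gamma ν := Real.Gamma_pos_of_pos hν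
    have h3 : 1 / Real.Gamma ν ≤ 2 * ν := by
      rw [div_le_iff₀ hΓν]; nlinarith
    have h4 : G 0 = Real.exp (-(w+s)) * (1 / Real.Gamma ν) := by
      simp only [hGdef]
      norm_num
    rw [h4]
    calc Real.exp (-(w+s)) * (1 / Real.Gamma ν) ≤ 1 * (2 * ν) := by
          apply mul_le_mul h1 h3 (by positivity) (by norm_num)
      _ = 2 * ν := by ring
  -- bound functions
  set S1 : ℕ → ℝ := fun m => w^(m+1) * Real.exp (-w) / ((m+1)! : ℝ) with hS1def
  have hS1nonneg : ∀ m, 0 ≤ S1 m := by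
    intro m
    have : (0:ℝ) < ((m+1)! : ℝ) := by exact_mod_cast Nat.factorial_pos (m+1)
    simp only [hS1def]
    positivity
  have hS1sum : Summable S1 := by
    have h2 : S1 = fun m : ℕ => Real.exp (-w) * (w^(m+1) / ((m+1)! : ℝ)) := by
      funext m; simp only [hS1def]; ring
    rw [h2]
    exact (summable_succ_div_fact w).mul_left _
  have hT1 : ∑' m, S1 m ≤ 1 := by
    have h1 : ∀ m : ℕ, S1 m = Real.exp (-w) * (w^(m+1) / ((m+1)! : ℝ)) := by
      intro m; simp only [hS1def]; ring
    rw [tsum_congr h1, tsum_mul_left, tsum_succ_div_fact]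
    have h2 : Real.exp (-w) * Real.exp w = 1 := by
      rw [← Real.exp_add]; norm_num
    have h3 : 0 < Real.exp (-w) := Real.exp_pos _
    nlinarith
  set S2 : ℕ → ℝ := fun m => ((m:ℝ)+2) * S1 m with hS2def
  have hS2nonneg : ∀ m, 0 ≤ S2 m := by
    intro m
    have := hS1nonneg m
    simp only [hS2def]
    positivity
  have hS2le : ∀ m : ℕ, S2 m ≤ 2 * Real.exp (-w) * (w^(m+1) / (m ! : ℝ)) := by
    intro m
    have hfm : (0:ℝ) < (m ! : ℝ) := by exact_mod_cast Nat.factorial_pos m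
    have hfac : ((m+1)! : ℝ) = ((m:ℝ)+1) * (m ! : ℝ) := by
      rw [Nat.factorial_succ]; push_cast; ring
    have h1 : ((m:ℝ)+2) / ((m+1)! : ℝ) ≤ 2 / (m ! : ℝ) := by
      rw [hfac, div_le_div_iff₀ (by positivity) hfm]
      nlinarith [hfm]
    have h2 : (0:ℝ) ≤ w^(m+1) * Real.exp (-w) := by positivity
    calc S2 m = (w^(m+1) * Real.exp (-w)) * (((m:ℝ)+2) / ((m+1)! : ℝ)) := by
          simp only [hS2def, hS1def]; ring
      _ ≤ (w^(m+1) * Real.exp (-w)) * (2 / (m ! : ℝ)) := mul_le_mul_of_nonneg_left h1 h2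
      _ = 2 * Real.exp (-w) * (w^(m+1) / (m ! : ℝ)) := by ring
  have hcmpsum : Summable (fun m : ℕ => 2 * Real.exp (-w) * (w^(m+1) / (m ! : ℝ))) :=
    (summable_succ_div_fact' w).mul_left _
  have hS2sum : Summable S2 :=
    Summable.of_nonneg_of_le hS2nonneg hS2le hcmpsum
  have hT2 : ∑' m, S2 m ≤ 2 * w := by
    calc ∑' m, S2 m ≤ ∑' m : ℕ, 2 * Real.exp (-w) * (w^(m+1) / (m ! : ℝ)) :=
          Summable.tsum_le_tsum hS2le hS2sum hcmpsum
      _ = 2 * Real.exp (-w) * (w * Real.exp w) := by rw [tsum_mul_left, tsum_succ_div_fact']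
      _ = 2 * w * (Real.exp (-w) * Real.exp w) := by ring
      _ = 2 * w := by rw [← Real.exp_add]; norm_num
  -- generic bound on G (m+1)
  have hterm : ∀ m : ℕ, G (m+1) ≤ ((m:ℝ)+2) ^ (max (1/2 - ν) 0) * S1 m := by
    intro m
    have h := termbound hν hw hws (m+1) (Nat.succ_ne_zero m)
    have hc : ((m+1:ℕ):ℝ) = (m:ℝ)+1 := by push_cast; ring
    simp only [hGdef, hS1def]
    calc Real.exp (-(w+s)) * (1 / (((m+1)! : ℝ) * Real.Gamma (((m+1:ℕ):ℝ) + ν)) * w^(m+1) * s^(m+1))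
        ≤ (((m+1:ℕ):ℝ)+1) ^ (max (1/2 - ν) 0) * (w^(m+1) * Real.exp (-w) / ((m+1)! : ℝ)) := h
      _ = ((m:ℝ)+2) ^ (max (1/2 - ν) 0) * (w^(m+1) * Real.exp (-w) / ((m+1)! : ℝ)) := by
          rw [hc, show (m:ℝ)+1+1 = (m:ℝ)+2 by ring]
  -- summability of G
  have hGsuccsum : Summable (fun m => G (m+1)) := by
    apply Summable.of_nonneg_of_le (fun m => hGnonneg (m+1)) _ hS2sum
    intro m
    calc G (m+1) ≤ ((m:ℝ)+2) ^ (max (1/2 - ν) 0) * S1 m := hterm m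
      _ ≤ ((m:ℝ)+2) * S1 m := by
          apply mul_le_mul_of_nonneg_right _ (hS1nonneg m)
          calc ((m:ℝ)+2) ^ (max (1/2 - ν) 0) ≤ ((m:ℝ)+2) ^ (1:ℝ) := by
                apply Real.rpow_le_rpow_of_exponent_le (by linarith [Nat.cast_nonneg (α := ℝ) m])
                rcases le_total (1/2 - ν) 0 with h | h
                · rw [max_eq_right h]; norm_num
                · rw [max_eq_left h]; linarith
            _ = (m:ℝ)+2 := Real.rpow_one _
  have hGsum : Summable G := (summable_nat_add_iff 1).mp hGsuccsum
  rw [Summable.tsum_eq_zero_add hGsum]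
  -- case split
  rcases lt_or_ge ν (1/2) with hlt | hge
  · rw [if_pos hlt]
    set β : ℝ := 1/2 - ν with hβdef
    have hβ0 : 0 < β := by simp only [hβdef]; linarith
    have hβmax : max (1/2 - ν) 0 = β := max_eq_left hβ0.le
    rcases le_or_gt w 1 with hw1 | hw1
    · -- cheap linear bound
      have hcheap : ∀ m : ℕ, G (m+1) ≤ 2 * Real.exp (-w) * (w^(m+1) / (m ! : ℝ)) := by
        intro m
        have h := termbound_lin hν hw hws m
        have hc : ((m+1:ℕ):ℝ) = (m:ℝ)+1 := by push_cast; ring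
        simp only [hGdef]
        rw [hc]
        exact h
      have h5 : ∑' m, G (m+1) ≤ 2 * w := by
        calc ∑' m, G (m+1) ≤ ∑' m : ℕ, 2 * Real.exp (-w) * (w^(m+1) / (m ! : ℝ)) :=
              Summable.tsum_le_tsum hcheap hGsuccsum hcmpsum
          _ = 2 * Real.exp (-w) * (w * Real.exp w) := by rw [tsum_mul_left, tsum_succ_div_fact']
          _ = 2 * w * (Real.exp (-w) * Real.exp w) := by ring
          _ = 2 * w := by rw [← Real.exp_add]; norm_num
      have hrpow : (0:ℝ) ≤ 3 * w ^ β := by positivity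
      linarith
    · -- w > 1
      have hw0 : (0:ℝ) < w := by linarith
      have hsplit : ∀ m : ℕ, ((m:ℝ)+2) ^ β ≤ w^β + ((m:ℝ)+2) * (w^β / w) := by
        intro m
        have hm0 : (0:ℝ) < (m:ℝ)+2 := by positivity
        have ha : (m:ℝ)+2 = w * (((m:ℝ)+2)/w) := by field_simp
        have hq : (0:ℝ) ≤ ((m:ℝ)+2)/w := by positivity
        have h1 : (((m:ℝ)+2)/w) ^ β ≤ 1 + ((m:ℝ)+2)/w := by
          rcases le_total (((m:ℝ)+2)/w) 1 with h | h
          · calc (((m:ℝ)+2)/w) ^ β ≤ 1 := Real.rpow_le_one hq h hβ0.le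
              _ ≤ 1 + ((m:ℝ)+2)/w := by linarith
          · calc (((m:ℝ)+2)/w) ^ β ≤ (((m:ℝ)+2)/w) ^ (1:ℝ) :=
                  Real.rpow_le_rpow_of_exponent_le h (by simp only [hβdef]; linarith)
              _ = ((m:ℝ)+2)/w := Real.rpow_one _
              _ ≤ 1 + ((m:ℝ)+2)/w := by linarith
        calc ((m:ℝ)+2) ^ β = (w * (((m:ℝ)+2)/w)) ^ β := by rw [← ha]
          _ = w^β * (((m:ℝ)+2)/w) ^ β := Real.mul_rpow hw0.le hq
          _ ≤ w^β * (1 + ((m:ℝ)+2)/w) := by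
              apply mul_le_mul_of_nonneg_left h1 (Real.rpow_nonneg hw0.le β)
          _ = w^β + ((m:ℝ)+2) * (w^β / w) := by field_simp
      have hbig : ∀ m : ℕ, G (m+1) ≤ w^β * S1 m + (w^β / w) * S2 m := by
        intro m
        calc G (m+1) ≤ ((m:ℝ)+2) ^ (max (1/2 - ν) 0) * S1 m := hterm m
          _ = ((m:ℝ)+2) ^ β * S1 m := by rw [hβmax]
          _ ≤ (w^β + ((m:ℝ)+2) * (w^β / w)) * S1 m :=
              mul_le_mul_of_nonneg_right (hsplit m) (hS1nonneg m)
          _ = w^β * S1 m + (w^β / w) * S2 m := by simp only [hS2def]; ring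
      have hsumbig : Summable (fun m => w^β * S1 m + (w^β / w) * S2 m) :=
        (hS1sum.mul_left _).add (hS2sum.mul_left _)
      have h5 : ∑' m, G (m+1) ≤ 3 * w^β := by
        calc ∑' m, G (m+1) ≤ ∑' m, (w^β * S1 m + (w^β / w) * S2 m) :=
              Summable.tsum_le_tsum hbig hGsuccsum hsumbig
          _ = w^β * ∑' m, S1 m + (w^β / w) * ∑' m, S2 m := by
              rw [Summable.tsum_add (hS1sum.mul_left _) (hS2sum.mul_left _), tsum_mul_left, tsum_mul_left]
          _ ≤ w^β * 1 + (w^β / w) * (2*w) := by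
              apply _root_.add_le_add
              · exact mul_le_mul_of_nonneg_left hT1 (Real.rpow_nonneg hw0.le β)
              · apply mul_le_mul_of_nonneg_left hT2 (by positivity)
          _ = 3 * w^β := by field_simp; ring
      linarith
  · rw [if_neg (not_lt.2 hge)]
    have hβmax : max (1/2 - ν) 0 = 0 := max_eq_right (by linarith)
    have hcap : ∀ m : ℕ, G (m+1) ≤ S1 m := by
      intro m
      calc G (m+1) ≤ ((m:ℝ)+2) ^ (max (1/2 - ν) 0) * S1 m := hterm m
        _ = S1 m := by rw [hβmax, Real.rpow_zero, one_mul]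
    have h5 : ∑' m, G (m+1) ≤ 1 :=
      le_trans (Summable.tsum_le_tsum hcap hGsuccsum hS1sum) hT1
    linarith

lemma inv_bound {γ M e : ℝ} (hγ : 0 < γ) (hγi : γ⁻¹ ≤ M) (hM : 1 ≤ M) (he : 0 ≤ e)
    {E : ℝ} (heE : e ≤ E) : γ ^ (-e) ≤ M ^ E := by
  have h1 : γ ^ (-e) = (γ⁻¹) ^ e := by
    rw [Real.rpow_neg hγ.le, Real.inv_rpow hγ.le]
  rw [h1]
  calc (γ⁻¹) ^ e ≤ M ^ e := Real.rpow_le_rpow (inv_nonneg.2 hγ.le) hγi he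
    _ ≤ M ^ E := Real.rpow_le_rpow_of_exponent_le hM heE

end QdensAux

/-- The transition density `q_t^{b,γ}(x,y)` of the Feller branching diffusion with
immigration (generator `b f' + γ x f''`) with respect to the measure `y^{b/γ−1} dy`:
`q_t^{b,γ}(x,y) = (γt)^{−b/γ} exp(−(x+y)/(γt)) Σ_m (1/(m! Γ(m+b/γ))) (x/(γt))^m (y/(γt))^m`. -/
noncomputable def qdens (b γ t x y : ℝ) : ℝ :=
  (γ * t) ^ (-(b / γ)) * Real.exp (-(x + y) / (γ * t)) *
    ∑' m : ℕ, (1 / ((m.factorial : ℝ) * Real.Gamma ((m : ℝ) + b / γ))) *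
      (x / (γ * t)) ^ m * (y / (γ * t)) ^ m

/-- For every `M ≥ 1` there is a constant `c = c(M)` such that for all `b, γ > 0` with
`max(γ, γ⁻¹, b, b⁻¹) ≤ M`, all `t > 0` and all `x, y ≥ 0`:
`q_t^{b,γ}(x,y) ≤ c [ t^{−b/γ} + 1_{(b/γ < 1/2)} (min(x,y))^{1/2 − b/γ} t^{−1/2} ]`. -/
theorem qdens_upper_bound (M : ℝ) (hM : 1 ≤ M) :
    ∃ c : ℝ, 0 < c ∧ ∀ b γ t x y : ℝ, 0 < b → 0 < γ →
      max (max γ γ⁻¹) (max b b⁻¹) ≤ M → 0 < t → 0 ≤ x → 0 ≤ y →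
      qdens b γ t x y ≤
        c * (t ^ (-(b / γ)) +
          if b / γ < 1 / 2 then (min x y) ^ (1 / 2 - b / γ) * t ^ (-(1 / 2 : ℝ)) else 0) := by
  have hM0 : (0:ℝ) < M := lt_of_lt_of_le one_pos hM
  have hMM : (0:ℝ) < M ^ (M^2) := Real.rpow_pos_of_pos hM0 _
  refine ⟨(2*M^2+2) * M ^ (M^2) + 3*M, by nlinarith, ?_⟩
  intro b γ t x y hb hγ hmax ht hx hy
  have hbM : b ≤ M := le_trans (le_trans (le_max_left _ _) (le_max_right _ _)) hmax
  have hγi : γ⁻¹ ≤ M := le_trans (le_trans (le_max_right _ _) (le_max_left _ _)) hmax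
  unfold qdens
  set A := γ * t with hAdef
  have hA : 0 < A := mul_pos hγ ht
  set ν := b / γ with hνdef
  have hν : 0 < ν := div_pos hb hγ
  have hνM : ν ≤ M^2 := by
    rw [hνdef, div_eq_mul_inv, sq]
    exact mul_le_mul hbM hγi (inv_nonneg.2 hγ.le) hM0.le
  set u := x / A with hudef
  set v := y / A with hvdef
  have hu : 0 ≤ u := div_nonneg hx hA.le
  have hv : 0 ≤ v := div_nonneg hy hA.le
  have he : -(x+y)/A = -(u+v) := by
    rw [hudef, hvdef, ← add_div, neg_div]
  rw [he, mul_assoc]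
  have key := core hν hu hv
  have hPn : (0:ℝ) ≤ A ^ (-ν) := Real.rpow_nonneg hA.le _
  have step1 : A ^ (-ν) * (Real.exp (-(u+v)) *
      ∑' m : ℕ, 1 / ((m.factorial : ℝ) * Real.Gamma ((m : ℝ) + ν)) * u^m * v^m)
      ≤ A ^ (-ν) * ((2*ν + 2) + (if ν < 1/2 then 3 * (min u v) ^ ((1:ℝ)/2 - ν) else 0)) :=
    mul_le_mul_of_nonneg_left key hPn
  refine le_trans step1 ?_
  -- piece 1
  have hAν : A ^ (-ν) = γ ^ (-ν) * t ^ (-ν) := by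
    rw [hAdef, Real.mul_rpow hγ.le ht.le]
  have hγν : γ ^ (-ν) ≤ M ^ (M^2) := inv_bound hγ hγi hM hν.le hνM
  have htν : (0:ℝ) < t ^ (-ν) := Real.rpow_pos_of_pos ht _
  have hpiece1 : A ^ (-ν) * (2*ν + 2) ≤ (2*M^2+2) * M ^ (M^2) * t ^ (-ν) := by
    rw [hAν]
    have h1 : γ ^ (-ν) * (2*ν + 2) ≤ M ^ (M^2) * (2*M^2+2) := by
      apply mul_le_mul hγν (by nlinarith) (by nlinarith) hMM.le
    calc γ ^ (-ν) * t ^ (-ν) * (2*ν + 2) = γ ^ (-ν) * (2*ν + 2) * t ^ (-ν) := by ring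
      _ ≤ M ^ (M^2) * (2*M^2+2) * t ^ (-ν) := mul_le_mul_of_nonneg_right h1 htν.le
      _ = (2*M^2+2) * M ^ (M^2) * t ^ (-ν) := by ring
  by_cases h12 : ν < 1/2
  · simp only [if_pos h12]
    set β : ℝ := 1/2 - ν with hβdef
    have hβ0 : 0 ≤ β := by rw [hβdef]; linarith
    have hmxy : (0:ℝ) ≤ min x y := le_min hx hy
    have hminuv : min u v = min x y / A := by
      rw [hudef, hvdef]
      exact min_div_div_right hA.le x y
    have hstep : (min u v) ^ ((1:ℝ)/2 - ν) = (min x y) ^ β / A ^ β := by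
      rw [hminuv, Real.div_rpow hmxy hA.le, hβdef]
    have hAhalf : A ^ (-ν) / A ^ β = A ^ (-(1/2:ℝ)) := by
      rw [← Real.rpow_sub hA]
      congr 1
      rw [hβdef]; ring
    have hAhalf2 : A ^ (-(1/2:ℝ)) = γ ^ (-(1/2:ℝ)) * t ^ (-(1/2:ℝ)) := by
      rw [hAdef, Real.mul_rpow hγ.le ht.le]
    have hγhalf : γ ^ (-(1/2:ℝ)) ≤ M := by
      have h := inv_bound hγ hγi hM (by norm_num : (0:ℝ) ≤ 1/2) (le_refl (1/2:ℝ))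
      have h2 : M ^ ((1:ℝ)/2) ≤ M ^ (1:ℝ) := Real.rpow_le_rpow_of_exponent_le hM (by norm_num)
      rw [Real.rpow_one] at h2
      calc γ ^ (-(1/2:ℝ)) = γ ^ (-((1:ℝ)/2)) := by norm_num
        _ ≤ M ^ ((1:ℝ)/2) := h
        _ ≤ M := h2
    have h3 : (0:ℝ) ≤ (min x y) ^ β * t ^ (-(1/2:ℝ)) := by positivity
    have hpiece2 : A ^ (-ν) * (3 * (min u v) ^ β)
        ≤ 3 * M * ((min x y) ^ β * t ^ (-(1/2:ℝ))) := by
      rw [hminuv, Real.div_rpow hmxy hA.le]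
      have hAβ : (0:ℝ) < A ^ β := Real.rpow_pos_of_pos hA _
      calc A ^ (-ν) * (3 * ((min x y) ^ β / A ^ β))
          = 3 * (min x y) ^ β * (A ^ (-ν) / A ^ β) := by ring
        _ = 3 * (min x y) ^ β * (γ ^ (-(1/2:ℝ)) * t ^ (-(1/2:ℝ))) := by rw [hAhalf, hAhalf2]
        _ = 3 * (γ ^ (-(1/2:ℝ)) * ((min x y) ^ β * t ^ (-(1/2:ℝ)))) := by ring
        _ ≤ 3 * (M * ((min x y) ^ β * t ^ (-(1/2:ℝ)))) := by
            apply mul_le_mul_of_nonneg_left (mul_le_mul_of_nonneg_right hγhalf h3) (by norm_num)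
        _ = 3 * M * ((min x y) ^ β * t ^ (-(1/2:ℝ))) := by ring
    have h2m : (0:ℝ) ≤ 2*M^2+2 := by positivity
    have h3m : (0:ℝ) ≤ 3*M := by linarith
    have hc1t2 : (0:ℝ) ≤ (2*M^2+2) * M ^ (M^2) * ((min x y) ^ β * t ^ (-(1/2:ℝ))) :=
      mul_nonneg (mul_nonneg h2m hMM.le) h3
    have hc2t1 : (0:ℝ) ≤ 3 * M * t ^ (-ν) := mul_nonneg h3m htν.le
    rw [mul_add]
    have hid : ((2*M^2+2) * M ^ (M^2) + 3*M) * (t ^ (-ν) + min x y ^ β * t ^ (-(1/2:ℝ)))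
        = (2*M^2+2) * M ^ (M^2) * t ^ (-ν)
          + (2*M^2+2) * M ^ (M^2) * (min x y ^ β * t ^ (-(1/2:ℝ)))
          + 3 * M * t ^ (-ν)
          + 3 * M * (min x y ^ β * t ^ (-(1/2:ℝ))) := by ring
    rw [hid]
    linarith [hpiece1, hpiece2, hc1t2, hc2t1]
  · simp only [if_neg h12, add_zero]
    calc A ^ (-ν) * (2*ν + 2) ≤ (2*M^2+2) * M ^ (M^2) * t ^ (-ν) := hpiece1
      _ ≤ ((2*M^2+2) * M ^ (M^2) + 3*M) * t ^ (-ν) := by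
          have h3m : (0:ℝ) ≤ 3*M := by linarith
          nlinarith [mul_nonneg h3m htν.le]
end

section
/- Let b, γ, t > 0 and x ≥ 0. Then for every real λ > −(γ t)^{-1}: ∫_0^∞ e^{−λ y} q_t^{b,γ}(x,y) y^{b/γ − 1} dy = (1 + λ γ t)^{−b/γ} exp( −x λ / (1 + λ γ t) ). -/
open MeasureTheory

/-- For `b, γ, t > 0`, `x ≥ 0` and every real `λ > −(γt)⁻¹`:
`∫_0^∞ e^{−λy} q_t^{b,γ}(x,y) y^{b/γ−1} dy = (1 + λγt)^{−b/γ} exp(−xλ/(1 + λγt))`. -/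
theorem qdens_laplace_transform (b γ t x : ℝ) (hb : 0 < b) (hγ : 0 < γ) (ht : 0 < t)
    (hx : 0 ≤ x) (l : ℝ) (hl : -(γ * t)⁻¹ < l) :
    (∫ y in Set.Ioi (0 : ℝ), Real.exp (-l * y) * qdens b γ t x y * y ^ (b / γ - 1))
      = (1 + l * γ * t) ^ (-(b / γ)) * Real.exp (-x * l / (1 + l * γ * t)) := by
  set s : ℝ := γ * t with hs_def
  have hs : 0 < s := mul_pos hγ ht
  set c : ℝ := b / γ with hc_def
  have hc : 0 < c := div_pos hb hγ
  set A : ℝ := l + s⁻¹ with hA_def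
  have hA : 0 < A := by
    have h1 := inv_pos.mpr hs
    rw [hA_def]
    linarith
  -- the summands
  set F : ℕ → ℝ → ℝ := fun m y =>
    (s ^ (-c) * Real.exp (-(x / s)) *
        (1 / ((m.factorial : ℝ) * Real.Gamma ((m : ℝ) + c))) * (x / s) ^ m * (s⁻¹) ^ m) *
      (y ^ ((m : ℝ) + c - 1) * Real.exp (-(A * y))) with hF_def
  have hGamma_pos : ∀ m : ℕ, 0 < Real.Gamma ((m : ℝ) + c) := fun m =>
    Real.Gamma_pos_of_pos (by positivity)
  have hconst_nonneg : ∀ m : ℕ,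
      0 ≤ s ^ (-c) * Real.exp (-(x / s)) *
        (1 / ((m.factorial : ℝ) * Real.Gamma ((m : ℝ) + c))) * (x / s) ^ m * (s⁻¹) ^ m := by
    intro m
    have := (hGamma_pos m).le
    positivity
  -- pointwise identity on Ioi 0
  have hpt : ∀ y ∈ Set.Ioi (0 : ℝ),
      Real.exp (-l * y) * qdens b γ t x y * y ^ (c - 1) = ∑' m : ℕ, F m y := by
    intro y hy
    have hy0 : 0 < y := hy
    rw [qdens]
    rw [show Real.exp (-l * y) *
        ((γ * t) ^ (-(b / γ)) * Real.exp (-(x + y) / (γ * t)) *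
          ∑' m : ℕ, (1 / ((m.factorial : ℝ) * Real.Gamma ((m : ℝ) + b / γ))) *
            (x / (γ * t)) ^ m * (y / (γ * t)) ^ m) * y ^ (c - 1)
      = (Real.exp (-l * y) * ((γ * t) ^ (-(b / γ)) * Real.exp (-(x + y) / (γ * t))) *
          y ^ (c - 1)) *
          ∑' m : ℕ, (1 / ((m.factorial : ℝ) * Real.Gamma ((m : ℝ) + b / γ))) *
            (x / (γ * t)) ^ m * (y / (γ * t)) ^ m from by ring]
    rw [← tsum_mul_left]
    refine tsum_congr fun m => ?_
    have hexp : Real.exp (-l * y) * Real.exp (-(x + y) / s)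
        = Real.exp (-(x / s)) * Real.exp (-(A * y)) := by
      rw [← Real.exp_add, ← Real.exp_add]
      congr 1
      simp only [hA_def, div_eq_mul_inv]
      ring
    have hyp : (y : ℝ) ^ m * y ^ (c - 1) = y ^ ((m : ℝ) + c - 1) := by
      rw [← Real.rpow_natCast y m, ← Real.rpow_add hy0]
      ring_nf
    have h1 : Real.exp (-l * y) * ((γ * t) ^ (-(b / γ)) * Real.exp (-(x + y) / (γ * t))) *
          y ^ (c - 1) *
          ((1 / ((m.factorial : ℝ) * Real.Gamma ((m : ℝ) + b / γ))) *
            (x / (γ * t)) ^ m * (y / (γ * t)) ^ m)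
        = (Real.exp (-l * y) * Real.exp (-(x + y) / s)) * (y ^ m * y ^ (c - 1)) *
          (s ^ (-c) * (1 / ((m.factorial : ℝ) * Real.Gamma ((m : ℝ) + c))) *
            (x / s) ^ m * (s⁻¹) ^ m) := by
      rw [div_pow y s m, ← hs_def, ← hc_def]
      ring
    rw [h1, hexp, hyp, hF_def]
    ring
  -- integrability of each summand
  have hint : ∀ m : ℕ, IntegrableOn (F m) (Set.Ioi (0 : ℝ)) := by
    intro m
    have hbase : IntegrableOn (fun y : ℝ => y ^ ((m : ℝ) + c - 1) * Real.exp (-(A * y)))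
        (Set.Ioi (0 : ℝ)) := by
      have hm0 : (0:ℝ) ≤ (m : ℝ) := Nat.cast_nonneg m
      have := integrableOn_rpow_mul_exp_neg_mul_rpow (p := 1) (s := (m : ℝ) + c - 1) (b := A)
        (by linarith) one_pos hA
      refine this.congr_fun (fun y hy => ?_) measurableSet_Ioi
      simp only [Real.rpow_one]
      ring_nf
    exact hbase.const_mul _
  -- value of each integral
  have hval : ∀ m : ℕ, (∫ y in Set.Ioi (0 : ℝ), F m y)
      = (s ^ (-c) * Real.exp (-(x / s)) * (1 / A) ^ c) *
        ((x * (s⁻¹ * s⁻¹ * A⁻¹)) ^ m / (m.factorial : ℝ)) := by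
    intro m
    rw [hF_def]
    rw [MeasureTheory.integral_const_mul]
    rw [Real.integral_rpow_mul_exp_neg_mul_Ioi (by positivity : (0:ℝ) < (m : ℝ) + c) hA]
    have hsplit : ((1:ℝ) / A) ^ ((m : ℝ) + c) = (1 / A) ^ c * ((1 / A) : ℝ) ^ m := by
      rw [← Real.rpow_natCast (1 / A) m, ← Real.rpow_add (by positivity)]
      ring_nf
    rw [hsplit]
    rw [show (x * (s⁻¹ * s⁻¹ * A⁻¹)) ^ m = (x / s) ^ m * s⁻¹ ^ m * ((1:ℝ) / A) ^ m from by
      rw [← mul_pow, ← mul_pow]; congr 1; rw [one_div, div_eq_mul_inv]; ring]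
    have hG := (hGamma_pos m).ne'
    have hfac : (m.factorial : ℝ) ≠ 0 := Nat.cast_ne_zero.mpr m.factorial_ne_zero
    have hΓ : (1 / ((m.factorial : ℝ) * Real.Gamma ((m : ℝ) + c))) * Real.Gamma ((m : ℝ) + c)
        = 1 / (m.factorial : ℝ) := by field_simp
    linear_combination (s ^ (-c) * Real.exp (-(x / s)) * (x / s) ^ m * s⁻¹ ^ m *
      ((1:ℝ) / A) ^ c * ((1:ℝ) / A) ^ m) * hΓ
  -- norms equal values
  have hnorm : ∀ m : ℕ, (∫ y in Set.Ioi (0 : ℝ), ‖F m y‖) = ∫ y in Set.Ioi (0 : ℝ), F m y := by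
    intro m
    refine setIntegral_congr_fun measurableSet_Ioi fun y hy => ?_
    have hy0 : 0 < y := hy
    refine Real.norm_of_nonneg ?_
    have h1 : 0 ≤ y ^ ((m : ℝ) + c - 1) * Real.exp (-(A * y)) := by positivity
    exact mul_nonneg (hconst_nonneg m) h1
  -- summability of integrals of norms
  have hsum : Summable fun m : ℕ => ∫ y in Set.Ioi (0 : ℝ), ‖F m y‖ := by
    simp only [hnorm, hval]
    exact (Real.summable_pow_div_factorial _).mul_left _
  -- interchange
  have hmain : (∫ y in Set.Ioi (0 : ℝ),
      Real.exp (-l * y) * qdens b γ t x y * y ^ (c - 1))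
      = ∑' m : ℕ, ∫ y in Set.Ioi (0 : ℝ), F m y := by
    rw [setIntegral_congr_fun measurableSet_Ioi hpt]
    exact (integral_tsum_of_summable_integral_norm hint hsum).symm
  rw [hmain]
  -- sum the series
  have hser : (∑' m : ℕ, ∫ y in Set.Ioi (0 : ℝ), F m y)
      = (s ^ (-c) * Real.exp (-(x / s)) * (1 / A) ^ c) *
        Real.exp (x * (s⁻¹ * s⁻¹ * A⁻¹)) := by
    simp only [hval]
    rw [tsum_mul_left]
    congr 1
    rw [Real.exp_eq_exp_ℝ, NormedSpace.exp_eq_tsum_div]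
  rw [hser]
  -- final algebra
  have hsA : 1 + l * γ * t = s * A := by
    rw [hA_def, hs_def]
    field_simp
    ring
  have hpow : s ^ (-c) * (1 / A) ^ c = (1 + l * γ * t) ^ (-c) := by
    rw [hsA, Real.mul_rpow hs.le hA.le, one_div, Real.inv_rpow hA.le, ← Real.rpow_neg hA.le]
  have hexp2 : Real.exp (-(x / s)) * Real.exp (x * (s⁻¹ * s⁻¹ * A⁻¹))
      = Real.exp (-x * l / (1 + l * γ * t)) := by
    rw [← Real.exp_add]
    congr 1
    rw [hsA]
    have hA' : A ≠ 0 := hA.ne'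
    have hs' : s ≠ 0 := hs.ne'
    field_simp
    rw [hA_def]
    field_simp
    ring
  calc s ^ (-c) * Real.exp (-(x / s)) * (1 / A) ^ c * Real.exp (x * (s⁻¹ * s⁻¹ * A⁻¹))
      = (s ^ (-c) * (1 / A) ^ c) * (Real.exp (-(x / s)) * Real.exp (x * (s⁻¹ * s⁻¹ * A⁻¹))) := by
        ring
    _ = (1 + l * γ * t) ^ (-c) * Real.exp (-x * l / (1 + l * γ * t)) := by rw [hpow, hexp2]
end

section
/- For every ε ∈ (0,1], every real α with ε ≤ α ≤ ε^{-1}, and every w ≥ 0: Σ_{n=1}^∞ w^n / ((n−1)! Γ(n+α)) ≤ ε^{-1/2} · Σ_{n=0}^∞ w^{n + 1/2} / (n! Γ(n+α)). -/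
/-- For every `ε ∈ (0,1]`, every real `α` with `ε ≤ α ≤ ε⁻¹`, and every `w ≥ 0`:
`Σ_{n=1}^∞ w^n / ((n−1)! Γ(n+α)) ≤ ε^{-1/2} · Σ_{n=0}^∞ w^{n+1/2} / (n! Γ(n+α))`.
(The left sum is reindexed over `n : ℕ` via `n ↦ n+1`.) -/
theorem sum_gamma_halfshift (ε : ℝ) (hε0 : 0 < ε) (hε1 : ε ≤ 1)
    (α : ℝ) (hα1 : ε ≤ α) (hα2 : α ≤ ε⁻¹) (w : ℝ) (hw : 0 ≤ w) :
    (∑' n : ℕ, w ^ (n + 1) / ((n.factorial : ℝ) * Real.Gamma (((n : ℝ) + 1) + α)))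
      ≤ ε ^ (-(1 / 2 : ℝ)) *
        ∑' n : ℕ, w ^ ((n : ℝ) + 1 / 2) / ((n.factorial : ℝ) * Real.Gamma ((n : ℝ) + α)) := by
  have hα0 : 0 < α := hε0.trans_le hα1
  rcases eq_or_lt_of_le hw with rfl | hw'
  · have h1 : ∀ n : ℕ, (0:ℝ) ^ (n + 1) / ((n.factorial : ℝ) * Real.Gamma (((n : ℝ) + 1) + α))
        = 0 := by
      intro n; rw [zero_pow (Nat.succ_ne_zero n), zero_div]
    have h2 : ∀ n : ℕ, (0:ℝ) ^ ((n : ℝ) + 1 / 2) / ((n.factorial : ℝ) * Real.Gamma ((n : ℝ) + α))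
        = 0 := by
      intro n
      rw [Real.zero_rpow (by positivity), zero_div]
    simp only [h1, h2, tsum_zero, mul_zero, le_refl]
  -- now 0 < w
  set a : ℕ → ℝ := fun n => w ^ ((n : ℝ) + 1 / 2) / ((n.factorial : ℝ) * Real.Gamma ((n : ℝ) + α))
    with ha
  set b : ℕ → ℝ := fun n => w ^ (n + 1) / ((n.factorial : ℝ) * Real.Gamma (((n : ℝ) + 1) + α))
    with hb
  have hΓn : ∀ n : ℕ, 0 < Real.Gamma ((n : ℝ) + α) := fun n =>
    Real.Gamma_pos_of_pos (by positivity)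
  have hΓsucc : ∀ n : ℕ, Real.Gamma (((n : ℝ) + 1) + α)
      = ((n : ℝ) + α) * Real.Gamma ((n : ℝ) + α) := by
    intro n
    have h : ((n : ℝ) + 1) + α = ((n : ℝ) + α) + 1 := by ring
    rw [h, Real.Gamma_add_one (by positivity)]
  have hapos : ∀ n, 0 < a n := by
    intro n
    have := hΓn n
    have hf : (0:ℝ) < n.factorial := by exact_mod_cast n.factorial_pos
    positivity
  have hbpos : ∀ n, 0 < b n := by
    intro n
    have h1 := hΓn n
    have hf : (0:ℝ) < n.factorial := by exact_mod_cast n.factorial_pos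
    have h2 : 0 < Real.Gamma (((n : ℝ) + 1) + α) := by rw [hΓsucc]; positivity
    positivity
  -- ratio formula for a
  have hratio : ∀ n : ℕ, a (n + 1) = w / (((n : ℝ) + 1) * ((n : ℝ) + α)) * a n := by
    intro n
    have hf : (0:ℝ) < n.factorial := by exact_mod_cast n.factorial_pos
    simp only [ha]
    rw [Nat.factorial_succ]
    push_cast
    rw [show ((n : ℝ) + 1 + 1 / 2 : ℝ) = ((n : ℝ) + 1 / 2) + 1 by ring,
      Real.rpow_add hw', Real.rpow_one, hΓsucc n]
    have h1 : ((n : ℝ) + 1) ≠ 0 := by positivity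
    have h2 : ((n : ℝ) + α) ≠ 0 := by positivity
    have h3 : Real.Gamma ((n : ℝ) + α) ≠ 0 := (hΓn n).ne'
    field_simp
  -- summability of a
  have hsa : Summable a := by
    apply summable_of_ratio_norm_eventually_le (r := 1 / 2) (by norm_num)
    filter_upwards [Filter.eventually_ge_atTop (⌈2 * w⌉₊ + 1)] with n hn
    have hn1 : (1 : ℝ) ≤ (n : ℝ) := by exact_mod_cast Nat.one_le_iff_ne_zero.mpr (by omega)
    have hn2 : 2 * w ≤ (n : ℝ) := le_trans (Nat.le_ceil _) (by exact_mod_cast Nat.le_of_succ_le hn)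
    have hq : w / (((n : ℝ) + 1) * ((n : ℝ) + α)) ≤ 1 / 2 := by
      rw [div_le_div_iff₀ (by positivity) (by norm_num)]
      nlinarith
    rw [Real.norm_eq_abs, Real.norm_eq_abs, abs_of_pos (hapos _), abs_of_pos (hapos _), hratio n]
    exact mul_le_mul_of_nonneg_right hq (hapos n).le
  have hsa' : Summable (fun n => a (n + 1)) := (summable_nat_add_iff 1).mpr hsa
  -- key pointwise bound
  have hsqε : 0 < Real.sqrt ε := Real.sqrt_pos.mpr hε0
  have hεrpow : ε ^ (-(1 / 2 : ℝ)) = (Real.sqrt ε)⁻¹ := by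
    rw [Real.rpow_neg hε0.le, Real.sqrt_eq_rpow]
  have hkey : ∀ n : ℕ, b n ≤ ε ^ (-(1 / 2 : ℝ)) * ((a n + a (n + 1)) / 2) := by
    intro n
    have hf : (0:ℝ) < n.factorial := by exact_mod_cast n.factorial_pos
    have hΓ := hΓn n
    have hnα : (0:ℝ) < (n : ℝ) + α := by positivity
    have hεn : ε * ((n : ℝ) + 1) ≤ (n : ℝ) + α := by
      have h := mul_le_of_le_one_left (Nat.cast_nonneg n : (0:ℝ) ≤ (n : ℝ)) hε1
      linarith
    -- step 1 : ε * (b n)^2 ≤ a n * a (n+1)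
    have hW : w ^ ((n : ℝ) + 1 / 2) * w ^ ((((n + 1 : ℕ)) : ℝ) + 1 / 2) = (w ^ (n + 1)) ^ 2 := by
      rw [← Real.rpow_add hw', ← Real.rpow_natCast w (n + 1), ← Real.rpow_natCast _ 2,
        ← Real.rpow_mul hw'.le]
      congr 1
      push_cast
      ring
    have h1 : ε * b n ^ 2 ≤ a n * a (n + 1) := by
      have hbn2 : b n ^ 2 = (w ^ (n + 1)) ^ 2 /
          (((n.factorial : ℝ) * Real.Gamma (((n : ℝ) + 1) + α)) ^ 2) := by
        simp only [hb]; rw [div_pow]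
      have hxy : a n * a (n + 1) = (w ^ (n + 1)) ^ 2 /
          (((n.factorial : ℝ) * Real.Gamma ((n : ℝ) + α)) *
            (((n + 1).factorial : ℝ) * Real.Gamma (((n + 1 : ℕ) : ℝ) + α))) := by
        simp only [ha]
        rw [div_mul_div_comm, hW]
      have hΓc : Real.Gamma (((n + 1 : ℕ) : ℝ) + α)
          = ((n : ℝ) + α) * Real.Gamma ((n : ℝ) + α) := by
        rw [show ((((n + 1 : ℕ)) : ℝ) + α) = ((n : ℝ) + 1) + α by push_cast; ring, hΓsucc]
      have hPQR : ε * (((n.factorial : ℝ) * Real.Gamma ((n : ℝ) + α)) *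
            (((n + 1).factorial : ℝ) * (((n : ℝ) + α) * Real.Gamma ((n : ℝ) + α))))
          ≤ ((n.factorial : ℝ) * (((n : ℝ) + α) * Real.Gamma ((n : ℝ) + α))) ^ 2 := by
        rw [Nat.factorial_succ]
        push_cast
        calc ε * (((n.factorial : ℝ) * Real.Gamma ((n : ℝ) + α)) *
              ((((n : ℝ) + 1) * (n.factorial : ℝ)) * (((n : ℝ) + α) * Real.Gamma ((n : ℝ) + α))))
            = (ε * ((n : ℝ) + 1)) *
              (((n : ℝ) + α) * (n.factorial : ℝ) ^ 2 * Real.Gamma ((n : ℝ) + α) ^ 2) := by ring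
          _ ≤ ((n : ℝ) + α) *
              (((n : ℝ) + α) * (n.factorial : ℝ) ^ 2 * Real.Gamma ((n : ℝ) + α) ^ 2) :=
              mul_le_mul_of_nonneg_right hεn (by positivity)
          _ = ((n.factorial : ℝ) * (((n : ℝ) + α) * Real.Gamma ((n : ℝ) + α))) ^ 2 := by ring
      rw [hbn2, hxy, hΓc, hΓsucc]
      have hfp1 : (0:ℝ) < (n + 1).factorial := by exact_mod_cast (n + 1).factorial_pos
      have hWpos : (0:ℝ) < (w ^ (n + 1)) ^ 2 := by positivity
      rw [← mul_div_assoc, div_le_div_iff₀ (by positivity) (by positivity)]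
      calc ε * (w ^ (n + 1)) ^ 2 *
            (((n.factorial : ℝ) * Real.Gamma ((n : ℝ) + α)) *
              (((n + 1).factorial : ℝ) * (((n : ℝ) + α) * Real.Gamma ((n : ℝ) + α))))
          = (w ^ (n + 1)) ^ 2 *
            (ε * (((n.factorial : ℝ) * Real.Gamma ((n : ℝ) + α)) *
              (((n + 1).factorial : ℝ) * (((n : ℝ) + α) * Real.Gamma ((n : ℝ) + α))))) := by ring
        _ ≤ (w ^ (n + 1)) ^ 2 *
            (((n.factorial : ℝ) * (((n : ℝ) + α) * Real.Gamma ((n : ℝ) + α))) ^ 2) :=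
            mul_le_mul_of_nonneg_left hPQR hWpos.le
    -- step 2 : take square roots
    have h2 : Real.sqrt ε * b n ≤ (a n + a (n + 1)) / 2 := by
      have hs : Real.sqrt (ε * b n ^ 2) ≤ Real.sqrt (a n * a (n + 1)) := Real.sqrt_le_sqrt h1
      rw [Real.sqrt_mul hε0.le, Real.sqrt_sq (hbpos n).le] at hs
      have hag : Real.sqrt (a n * a (n + 1)) ≤ (a n + a (n + 1)) / 2 := by
        rw [Real.sqrt_mul (hapos n).le]
        nlinarith [Real.sq_sqrt (hapos n).le, Real.sq_sqrt (hapos (n + 1)).le,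
          sq_nonneg (Real.sqrt (a n) - Real.sqrt (a (n + 1)))]
      linarith
    rw [hεrpow]
    calc b n = (Real.sqrt ε)⁻¹ * (Real.sqrt ε * b n) := by field_simp
      _ ≤ (Real.sqrt ε)⁻¹ * ((a n + a (n + 1)) / 2) :=
          mul_le_mul_of_nonneg_left h2 (inv_nonneg.mpr hsqε.le)
  -- assemble
  have hsc : Summable (fun n => ε ^ (-(1 / 2 : ℝ)) * ((a n + a (n + 1)) / 2)) :=
    (((hsa.add hsa').div_const 2).mul_left _)
  have hsb : Summable b := Summable.of_nonneg_of_le (fun n => (hbpos n).le) hkey hsc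
  have hshift : ∑' n, a (n + 1) ≤ ∑' n, a n := by
    have h0 := Summable.tsum_eq_zero_add hsa
    have := (hapos 0).le
    linarith
  have hK : (0:ℝ) ≤ ε ^ (-(1 / 2 : ℝ)) := Real.rpow_nonneg hε0.le _
  calc ∑' n, b n ≤ ∑' n, ε ^ (-(1 / 2 : ℝ)) * ((a n + a (n + 1)) / 2) :=
        Summable.tsum_le_tsum hkey hsb hsc
    _ = ε ^ (-(1 / 2 : ℝ)) * ((∑' n, a n + ∑' n, a (n + 1)) / 2) := by
        rw [tsum_mul_left, tsum_div_const, Summable.tsum_add hsa hsa']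
    _ ≤ ε ^ (-(1 / 2 : ℝ)) * ((∑' n, a n + ∑' n, a n) / 2) := by
        gcongr
    _ = ε ^ (-(1 / 2 : ℝ)) * ∑' n, a n := by ring
end

section
/- For every real α > 0, every integer n ≥ 1 and every w ≥ 0: w^n / ((n−1)! Γ(n+α)) ≤ (1/2) · max(α^{-1/2}, 1) · [ w^{n − 1/2} / ((n−1)! Γ(n−1+α)) + w^{n + 1/2} / (n! Γ(n+α)) ]. -/
/-- For every real `α > 0`, every integer `n ≥ 1` and every `w ≥ 0`:
`w^n / ((n−1)! Γ(n+α)) ≤ (1/2)·max(α^{-1/2},1)·[ w^{n−1/2}/((n−1)! Γ(n−1+α)) + w^{n+1/2}/(n! Γ(n+α)) ]`. -/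
theorem gamma_quadratic_interpolation (α : ℝ) (hα : 0 < α) (n : ℕ) (hn : 1 ≤ n)
    (w : ℝ) (hw : 0 ≤ w) :
    w ^ n / (((n - 1).factorial : ℝ) * Real.Gamma ((n : ℝ) + α))
      ≤ (1 / 2) * max (α ^ (-(1 / 2 : ℝ))) 1 *
        (w ^ ((n : ℝ) - 1 / 2) / (((n - 1).factorial : ℝ) * Real.Gamma ((n : ℝ) - 1 + α))
          + w ^ ((n : ℝ) + 1 / 2) / ((n.factorial : ℝ) * Real.Gamma ((n : ℝ) + α))) := by
  have hn1 : (1:ℝ) ≤ (n:ℝ) := by exact_mod_cast hn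
  set M : ℝ := max (α ^ (-(1 / 2 : ℝ))) 1 with hM
  have hM1 : (1:ℝ) ≤ M := le_max_right _ _
  have hMpos : 0 < M := lt_of_lt_of_le one_pos hM1
  have hc : (0:ℝ) < (n:ℝ) - 1 + α := by linarith
  have hG0 : 0 < Real.Gamma ((n : ℝ) - 1 + α) := Real.Gamma_pos_of_pos hc
  have hGeq : Real.Gamma ((n : ℝ) + α) = ((n:ℝ) - 1 + α) * Real.Gamma ((n : ℝ) - 1 + α) := by
    rw [show (n:ℝ) + α = ((n:ℝ) - 1 + α) + 1 by ring, Real.Gamma_add_one (ne_of_gt hc)]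
  have hG : 0 < Real.Gamma ((n : ℝ) + α) := by
    rw [hGeq]; positivity
  have hF : 0 < ((n - 1).factorial : ℝ) := by positivity
  have hfact : (n.factorial : ℝ) = (n : ℝ) * ((n - 1).factorial : ℝ) := by
    rw [← Nat.cast_mul, Nat.mul_factorial_pred (by omega)]
  -- key bound : n ≤ M^2 * (n - 1 + α)
  have hnpos : (0:ℝ) < (n:ℝ) := by linarith
  have hM2 : (n:ℝ) ≤ M ^ 2 * ((n:ℝ) - 1 + α) := by
    rcases le_total α 1 with h1 | h1
    · have hMa : α ^ (-(1 / 2 : ℝ)) ≤ M := le_max_left _ _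
      have ha0 : 0 ≤ α ^ (-(1 / 2 : ℝ)) := Real.rpow_nonneg hα.le _
      have hsq : α⁻¹ ≤ M ^ 2 := by
        have : (α ^ (-(1 / 2 : ℝ))) ^ 2 ≤ M ^ 2 := by nlinarith
        calc α⁻¹ = (α ^ (-(1 / 2 : ℝ))) ^ 2 := by
              rw [← Real.rpow_natCast (α ^ (-(1 / 2 : ℝ))) 2, ← Real.rpow_mul hα.le,
                show (-(1 / 2 : ℝ)) * ((2:ℕ):ℝ) = -1 by norm_num, Real.rpow_neg_one]
          _ ≤ M ^ 2 := this
      have h2 : (n:ℝ) * α ≤ (n:ℝ) - 1 + α := by nlinarith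
      have := mul_le_mul_of_nonneg_right hsq hc.le
      rw [inv_mul_eq_div] at this
      have h3 : (n:ℝ) ≤ ((n:ℝ) - 1 + α) / α := by
        rw [le_div_iff₀ hα]; linarith
      linarith
    · have hMsq : 1 ≤ M ^ 2 := by nlinarith [sq_nonneg (M - 1)]
      nlinarith [mul_le_mul hMsq (show (n:ℝ) ≤ (n:ℝ) - 1 + α by linarith) hnpos.le (by positivity : (0:ℝ) ≤ M ^ 2)]
  rcases eq_or_lt_of_le hw with h0 | hw'
  · rw [← h0]
    have h1 : (0:ℝ) ^ n = 0 := zero_pow (by omega)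
    have h2 : (0:ℝ) ^ ((n : ℝ) - 1 / 2) = 0 := by
      exact Real.zero_rpow (ne_of_gt (by linarith))
    have h3 : (0:ℝ) ^ ((n : ℝ) + 1 / 2) = 0 := by
      exact Real.zero_rpow (ne_of_gt (by positivity))
    rw [h1, h2, h3]; simp
  · set s : ℝ := w ^ ((1:ℝ)/2) with hs
    have hspos : 0 < s := Real.rpow_pos_of_pos hw' _
    have hss : s * s = w := by
      rw [hs, ← Real.rpow_add hw']; norm_num
    have hw1 : w ^ ((n : ℝ) - 1 / 2) = w ^ n / s := by
      rw [Real.rpow_sub hw', Real.rpow_natCast]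
    have hw2 : w ^ ((n : ℝ) + 1 / 2) = w ^ n * s := by
      rw [Real.rpow_add hw', Real.rpow_natCast]
    have hW : 0 < w ^ n := pow_pos hw' n
    set W := w ^ n with hWdef
    set F := ((n - 1).factorial : ℝ) with hFdef
    set G0 := Real.Gamma ((n : ℝ) - 1 + α) with hG0def
    set c := (n:ℝ) - 1 + α with hcdef
    rw [hw1, hw2, hGeq, hfact]
    have key : 2 * (n:ℝ) * s ≤ M * ((n:ℝ) * c + s * s) := by
      nlinarith [sq_nonneg (M * s - (n:ℝ)), mul_nonneg hnpos.le (sub_nonneg.2 hM2),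
        sq_nonneg s, mul_pos hMpos hspos]
    rw [div_le_iff₀ (by positivity)]
    have expand : (1 / 2) * M * (W / s / (F * G0) + W * s / ((n:ℝ) * F * (c * G0))) *
        (F * (c * G0)) = (M * ((n:ℝ) * c + s * s)) * (W / (2 * (n:ℝ) * s)) := by
      field_simp
    rw [expand]
    have h4 : W = (2 * (n:ℝ) * s) * (W / (2 * (n:ℝ) * s)) := by
      field_simp
    calc W = (2 * (n:ℝ) * s) * (W / (2 * (n:ℝ) * s)) := h4
      _ ≤ (M * ((n:ℝ) * c + s * s)) * (W / (2 * (n:ℝ) * s)) := by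
          apply mul_le_mul_of_nonneg_right key
          positivity
end

section
/- There is a universal constant c > 0 such that for all λ ≥ 0 and all real r with |r| ≤ 2: Σ_{n=2}^∞ n^r e^{−λ} λ^n / n! ≤ c (1 + λ)^r. Equivalently, if N is a Poisson random variable with mean λ, then E(N^r 1_{N ≥ 2}) ≤ c (1+λ)^r. -/
private lemma exp_tsum_aux (l : ℝ) : (∑' n : ℕ, l ^ n / (n.factorial : ℝ)) = Real.exp l := by
  rw [Real.exp_eq_exp_ℝ, NormedSpace.exp_eq_tsum_div]

private lemma rpow_le_aux {x r : ℝ} (hx : 0 < x) (hr : |r| ≤ 2) :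
    x ^ r ≤ x ^ (2 : ℝ) + x ^ (-2 : ℝ) := by
  obtain ⟨hr1, hr2⟩ := abs_le.1 hr
  rcases le_total 1 x with h | h
  · have h1 : x ^ r ≤ x ^ (2 : ℝ) := Real.rpow_le_rpow_of_exponent_le h hr2
    have h2 : (0:ℝ) ≤ x ^ (-2 : ℝ) := Real.rpow_nonneg hx.le _
    linarith
  · have h1 : x ^ r ≤ x ^ (-2 : ℝ) := Real.rpow_le_rpow_of_exponent_ge hx h hr1
    have h2 : (0:ℝ) ≤ x ^ (2 : ℝ) := Real.rpow_nonneg hx.le _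
    linarith

set_option maxHeartbeats 1000000 in
private lemma key_aux {l : ℝ} (hl : 0 ≤ l) {r : ℝ} (hr : |r| ≤ 2) (m : ℕ) :
    ((m + 2 : ℕ) : ℝ) ^ r * Real.exp (-l) * l ^ (m + 2) / ((m + 2).factorial : ℝ) ≤
      (1 + l) ^ r * Real.exp (-l) *
        (2 * (l ^ m / (m.factorial : ℝ)) + l ^ (m + 2) / ((m + 2).factorial : ℝ) +
          2 * (l ^ (m + 3) / ((m + 3).factorial : ℝ)) +
          6 * (l ^ (m + 4) / ((m + 4).factorial : ℝ))) := by
  have hl1 : (0:ℝ) < 1 + l := by linarith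
  set c : ℝ := ((m + 2 : ℕ) : ℝ) with hc
  have hc0 : (0:ℝ) < c := by positivity
  set x : ℝ := c / (1 + l) with hxdef
  have hx : 0 < x := by positivity
  -- n^r = (1+l)^r * x^r
  have hsplit : c ^ r = (1 + l) ^ r * x ^ r := by
    rw [hxdef, Real.div_rpow hc0.le hl1.le]
    field_simp
  have hxr : x ^ r ≤ x ^ (2:ℝ) + x ^ (-2:ℝ) := rpow_le_aux hx hr
  have hx2 : x ^ (2:ℝ) = c ^ 2 / (1 + l) ^ 2 := by
    rw [hxdef, Real.rpow_two, div_pow]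
  have hxm2 : x ^ (-2:ℝ) = (1 + l) ^ 2 / c ^ 2 := by
    rw [Real.rpow_neg hx.le, Real.rpow_two, hxdef, div_pow, inv_div]
  -- factorial facts
  have hF0 : (0:ℝ) < (m.factorial : ℝ) := by positivity
  have hF2 : ((m+2).factorial : ℝ) = ((m:ℝ) + 2) * ((m:ℝ) + 1) * (m.factorial : ℝ) := by
    rw [show m + 2 = (m+1) + 1 from rfl, Nat.factorial_succ, Nat.factorial_succ]
    push_cast; ring
  have hF3 : ((m+3).factorial : ℝ) = ((m:ℝ) + 3) * ((m+2).factorial : ℝ) := by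
    rw [show m + 3 = (m+2) + 1 from rfl, Nat.factorial_succ]; push_cast; ring
  have hF4 : ((m+4).factorial : ℝ) = ((m:ℝ) + 4) * ((m:ℝ) + 3) * ((m+2).factorial : ℝ) := by
    rw [show m + 4 = (m+3) + 1 from rfl, Nat.factorial_succ, Nat.cast_mul, hF3]
    push_cast; ring
  have hF2p : (0:ℝ) < ((m+2).factorial : ℝ) := by positivity
  have hF3p : (0:ℝ) < ((m+3).factorial : ℝ) := by positivity
  have hF4p : (0:ℝ) < ((m+4).factorial : ℝ) := by positivity
  have hcm : c = (m:ℝ) + 2 := by rw [hc]; push_cast; ring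
  have hlm : (0:ℝ) ≤ l ^ m := by positivity
  -- part (a)
  have ha : x ^ (2:ℝ) * (l ^ (m+2) / ((m+2).factorial : ℝ)) ≤ 2 * (l ^ m / (m.factorial : ℝ)) := by
    rw [hx2]
    have k1 : l ^ 2 / (1 + l) ^ 2 ≤ 1 := by
      rw [div_le_one (by positivity)]; nlinarith
    have k2 : c ^ 2 / ((m+2).factorial : ℝ) ≤ 2 / (m.factorial : ℝ) := by
      rw [div_le_div_iff₀ hF2p hF0, hF2, hcm]
      nlinarith [hF0.le, mul_nonneg (Nat.cast_nonneg m : (0:ℝ) ≤ m) hF0.le]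
    calc c ^ 2 / (1 + l) ^ 2 * (l ^ (m+2) / ((m+2).factorial : ℝ))
        = l ^ m * ((l ^ 2 / (1 + l) ^ 2) * (c ^ 2 / ((m+2).factorial : ℝ))) := by ring
      _ ≤ l ^ m * (1 * (2 / (m.factorial : ℝ))) := by
          apply mul_le_mul_of_nonneg_left _ hlm
          exact mul_le_mul k1 k2 (by positivity) (by norm_num)
      _ = 2 * (l ^ m / (m.factorial : ℝ)) := by ring
  -- part (b)
  have hb : x ^ (-2:ℝ) * (l ^ (m+2) / ((m+2).factorial : ℝ)) ≤
      l ^ (m+2) / ((m+2).factorial : ℝ) + 2 * (l ^ (m+3) / ((m+3).factorial : ℝ)) +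
        6 * (l ^ (m+4) / ((m+4).factorial : ℝ)) := by
    rw [hxm2]
    have hb1 : (1:ℝ) / c ^ 2 * (l ^ (m+2) / ((m+2).factorial : ℝ)) ≤
        l ^ (m+2) / ((m+2).factorial : ℝ) := by
      have hc2 : (2:ℝ) ≤ c := by
        rw [hcm]; have := (Nat.cast_nonneg m : (0:ℝ) ≤ (m:ℝ)); linarith
      have h1 : (1:ℝ) / c ^ 2 ≤ 1 := by
        rw [div_le_one (by positivity)]; nlinarith
      have h2 : (0:ℝ) ≤ l ^ (m+2) / ((m+2).factorial : ℝ) := by positivity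
      nlinarith
    have hb2 : (2 * l) / c ^ 2 * (l ^ (m+2) / ((m+2).factorial : ℝ)) ≤
        2 * (l ^ (m+3) / ((m+3).factorial : ℝ)) := by
      have e1 : (2 * l) / c ^ 2 * (l ^ (m+2) / ((m+2).factorial : ℝ))
          = 2 * (l ^ (m+3) / (c ^ 2 * ((m+2).factorial : ℝ))) := by
        field_simp; ring
      rw [e1]
      have k1 : (1:ℝ) / (c ^ 2 * ((m+2).factorial : ℝ)) ≤ 1 / ((m+3).factorial : ℝ) := by
        apply one_div_le_one_div_of_le hF3p
        rw [hF3, hcm]; nlinarith [hF2p.le, mul_nonneg (Nat.cast_nonneg m : (0:ℝ) ≤ m) hF2p.le]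
      have h1 : l ^ (m+3) / (c ^ 2 * ((m+2).factorial : ℝ)) ≤ l ^ (m+3) / ((m+3).factorial : ℝ) := by
        calc l ^ (m+3) / (c ^ 2 * ((m+2).factorial : ℝ))
            = l ^ (m+3) * (1 / (c ^ 2 * ((m+2).factorial : ℝ))) := by ring
          _ ≤ l ^ (m+3) * (1 / ((m+3).factorial : ℝ)) :=
              mul_le_mul_of_nonneg_left k1 (by positivity)
          _ = l ^ (m+3) / ((m+3).factorial : ℝ) := by ring
      linarith
    have hb3 : (l ^ 2) / c ^ 2 * (l ^ (m+2) / ((m+2).factorial : ℝ)) ≤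
        6 * (l ^ (m+4) / ((m+4).factorial : ℝ)) := by
      have e1 : (l ^ 2) / c ^ 2 * (l ^ (m+2) / ((m+2).factorial : ℝ))
          = l ^ (m+4) / (c ^ 2 * ((m+2).factorial : ℝ)) := by
        field_simp; ring
      rw [e1]
      have k1 : (1:ℝ) / (c ^ 2 * ((m+2).factorial : ℝ)) ≤ 6 / ((m+4).factorial : ℝ) := by
        rw [div_le_div_iff₀ (by positivity) hF4p, hF4, hcm]
        nlinarith [hF2p.le, mul_nonneg (Nat.cast_nonneg m : (0:ℝ) ≤ m) hF2p.le,
          mul_nonneg (mul_nonneg (Nat.cast_nonneg m : (0:ℝ) ≤ m) (Nat.cast_nonneg m : (0:ℝ) ≤ m)) hF2p.le]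
      calc l ^ (m+4) / (c ^ 2 * ((m+2).factorial : ℝ))
          = l ^ (m+4) * (1 / (c ^ 2 * ((m+2).factorial : ℝ))) := by ring
        _ ≤ l ^ (m+4) * (6 / ((m+4).factorial : ℝ)) :=
            mul_le_mul_of_nonneg_left k1 (by positivity)
        _ = 6 * (l ^ (m+4) / ((m+4).factorial : ℝ)) := by ring
    have e2 : (1 + l) ^ 2 / c ^ 2 * (l ^ (m+2) / ((m+2).factorial : ℝ))
        = (1:ℝ) / c ^ 2 * (l ^ (m+2) / ((m+2).factorial : ℝ))
          + (2 * l) / c ^ 2 * (l ^ (m+2) / ((m+2).factorial : ℝ))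
          + (l ^ 2) / c ^ 2 * (l ^ (m+2) / ((m+2).factorial : ℝ)) := by ring
    rw [e2]; linarith
  -- combine
  have hexp : (0:ℝ) ≤ Real.exp (-l) := (Real.exp_pos _).le
  have hterm : (0:ℝ) ≤ l ^ (m+2) / ((m+2).factorial : ℝ) := by positivity
  have hrp : (0:ℝ) ≤ (1 + l) ^ r := Real.rpow_nonneg hl1.le _
  calc c ^ r * Real.exp (-l) * l ^ (m+2) / ((m+2).factorial : ℝ)
      = (1 + l) ^ r * Real.exp (-l) * (x ^ r * (l ^ (m+2) / ((m+2).factorial : ℝ))) := by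
        rw [hsplit]; ring
    _ ≤ (1 + l) ^ r * Real.exp (-l) * ((x ^ (2:ℝ) + x ^ (-2:ℝ)) * (l ^ (m+2) / ((m+2).factorial : ℝ))) := by
        apply mul_le_mul_of_nonneg_left _ (by positivity)
        exact mul_le_mul_of_nonneg_right hxr hterm
    _ ≤ (1 + l) ^ r * Real.exp (-l) *
        (2 * (l ^ m / (m.factorial : ℝ)) + l ^ (m+2) / ((m+2).factorial : ℝ) +
          2 * (l ^ (m+3) / ((m+3).factorial : ℝ)) + 6 * (l ^ (m+4) / ((m+4).factorial : ℝ))) := by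
        apply mul_le_mul_of_nonneg_left _ (by positivity)
        have := add_le_add ha hb
        rw [add_mul] at *
        linarith

set_option maxHeartbeats 1000000 in
/-- There is a universal constant `c > 0` such that for all `λ ≥ 0` and all real `r`
with `|r| ≤ 2`: `Σ_{n=2}^∞ n^r e^{−λ} λ^n / n! ≤ c (1 + λ)^r`, i.e. if `N` is Poisson
with mean `λ` then `E(N^r 1_{N ≥ 2}) ≤ c (1+λ)^r`. -/
theorem poisson_power_moment_bound :
    ∃ c : ℝ, 0 < c ∧ ∀ (l : ℝ), 0 ≤ l → ∀ (r : ℝ), |r| ≤ 2 →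
      (∑' n : ℕ, if 2 ≤ n then (n : ℝ) ^ r * Real.exp (-l) * l ^ n / (n.factorial : ℝ) else 0)
        ≤ c * (1 + l) ^ r := by
  refine ⟨11, by norm_num, ?_⟩
  intro l hl r hr
  have hl1 : (0:ℝ) < 1 + l := by linarith
  set u : ℕ → ℝ := fun n => l ^ n / (n.factorial : ℝ) with hu
  have su : Summable u := Real.summable_pow_div_factorial l
  have hut : ∑' n, u n = Real.exp l := exp_tsum_aux l
  have hu0 : ∀ n, 0 ≤ u n := fun n => by positivity
  set g : ℕ → ℕ → ℝ := fun k n => if 2 ≤ n then u (n - 2 + k) else 0 with hg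
  have hg_shift : ∀ k n, g k (n + 2) = u (n + k) := by
    intro k n
    have e : n + 2 - 2 + k = n + k := by omega
    simp only [hg, e]
    rw [if_pos (by omega)]
  have sg : ∀ k, Summable (g k) := by
    intro k
    rw [← summable_nat_add_iff 2]
    simp only [hg_shift]
    exact (summable_nat_add_iff k).2 su
  have tg : ∀ k, ∑' n, g k n ≤ Real.exp l := by
    intro k
    have h1 : ∑ i ∈ Finset.range 2, g k i + ∑' n, g k (n + 2) = ∑' n, g k n :=
      Summable.sum_add_tsum_nat_add 2 (sg k)
    have h2 : ∑ i ∈ Finset.range 2, g k i = 0 := by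
      rw [Finset.sum_range_succ, Finset.sum_range_one]
      simp [hg]
    have h3 : ∑' n, g k (n + 2) = ∑' n, u (n + k) := by
      simp only [hg_shift]
    have h4 : ∑ i ∈ Finset.range k, u i + ∑' n, u (n + k) = Real.exp l := by
      rw [Summable.sum_add_tsum_nat_add k su, hut]
    have h5 : (0:ℝ) ≤ ∑ i ∈ Finset.range k, u i :=
      Finset.sum_nonneg fun i _ => hu0 i
    rw [← h1, h2, h3]
    linarith
  set G : ℕ → ℝ := fun n =>
    (1 + l) ^ r * Real.exp (-l) * (2 * g 0 n + g 2 n + 2 * g 3 n + 6 * g 4 n) with hG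
  have sG : Summable G := by
    apply Summable.mul_left
    exact (((((sg 0).mul_left 2).add (sg 2)).add ((sg 3).mul_left 2)).add ((sg 4).mul_left 6))
  set f : ℕ → ℝ := fun n =>
    if 2 ≤ n then (n : ℝ) ^ r * Real.exp (-l) * l ^ n / (n.factorial : ℝ) else 0 with hf
  have hfG : ∀ n, f n ≤ G n := by
    intro n
    by_cases hn : 2 ≤ n
    · obtain ⟨m, rfl⟩ : ∃ m, n = m + 2 := ⟨n - 2, by omega⟩
      simp only [hf, hG, hg, if_pos hn]
      have e0 : m + 2 - 2 + 0 = m := by omega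
      have e2 : m + 2 - 2 + 2 = m + 2 := by omega
      have e3 : m + 2 - 2 + 3 = m + 3 := by omega
      have e4 : m + 2 - 2 + 4 = m + 4 := by omega
      rw [e0, e2, e3, e4]
      exact key_aux hl hr m
    · simp only [hf, hG, hg, if_neg hn]
      simp
  have hf0 : ∀ n, 0 ≤ f n := by
    intro n
    simp only [hf]
    split
    · have : (0:ℝ) ≤ (n:ℝ) ^ r := Real.rpow_nonneg (by positivity) _
      positivity
    · exact le_refl _
  have sf : Summable f := Summable.of_nonneg_of_le hf0 hfG sG
  have h6 : ∑' n, f n ≤ ∑' n, G n := Summable.tsum_le_tsum hfG sf sG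
  have h7 : ∑' n, G n = (1 + l) ^ r * Real.exp (-l) *
      (2 * ∑' n, g 0 n + ∑' n, g 2 n + 2 * ∑' n, g 3 n + 6 * ∑' n, g 4 n) := by
    simp only [hG]
    rw [tsum_mul_left]
    congr 1
    rw [Summable.tsum_add ((((sg 0).mul_left 2).add (sg 2)).add ((sg 3).mul_left 2)) ((sg 4).mul_left 6),
      Summable.tsum_add (((sg 0).mul_left 2).add (sg 2)) ((sg 3).mul_left 2),
      Summable.tsum_add ((sg 0).mul_left 2) (sg 2), tsum_mul_left, tsum_mul_left, tsum_mul_left]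
  have hg0nn : ∀ k, (0:ℝ) ≤ ∑' n, g k n := by
    intro k
    apply tsum_nonneg
    intro n
    simp only [hg]
    split
    · exact hu0 _
    · exact le_refl _
  have h8 : 2 * ∑' n, g 0 n + ∑' n, g 2 n + 2 * ∑' n, g 3 n + 6 * ∑' n, g 4 n ≤
      11 * Real.exp l := by
    have := tg 0; have := tg 2; have := tg 3; have := tg 4
    linarith
  have hrp : (0:ℝ) ≤ (1 + l) ^ r := Real.rpow_nonneg hl1.le _
  have hexp : (0:ℝ) ≤ Real.exp (-l) := (Real.exp_pos _).le
  have h9 : ∑' n, G n ≤ 11 * (1 + l) ^ r := by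
    rw [h7]
    have h10 : (1 + l) ^ r * Real.exp (-l) *
        (2 * ∑' n, g 0 n + ∑' n, g 2 n + 2 * ∑' n, g 3 n + 6 * ∑' n, g 4 n) ≤
        (1 + l) ^ r * Real.exp (-l) * (11 * Real.exp l) :=
      mul_le_mul_of_nonneg_left h8 (by positivity)
    have h11 : Real.exp (-l) * Real.exp l = 1 := by
      rw [← Real.exp_add]; simp
    calc (1 + l) ^ r * Real.exp (-l) *
        (2 * ∑' n, g 0 n + ∑' n, g 2 n + 2 * ∑' n, g 3 n + 6 * ∑' n, g 4 n)
        ≤ (1 + l) ^ r * Real.exp (-l) * (11 * Real.exp l) := h10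
      _ = 11 * (1 + l) ^ r * (Real.exp (-l) * Real.exp l) := by ring
      _ = 11 * (1 + l) ^ r := by rw [h11]; ring
  calc (∑' n, f n) ≤ ∑' n, G n := h6
    _ ≤ 11 * (1 + l) ^ r := h9
end

section
/- There is a universal constant c > 0 such that for all λ > 0 and all real p with −1 ≤ p ≤ 1/2: Σ_{n=1}^∞ |n − λ| n^p e^{−λ} λ^n / n! ≤ c · min(λ, λ^{1/2 + p}). Equivalently, if N is a Poisson random variable with mean λ, then E(|N − λ| N^p 1_{N > 0}) ≤ c min(λ, λ^{1/2+p}). -/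
open Real

lemma myExp_tsum (x : ℝ) : (∑' n : ℕ, x ^ n / n.factorial) = Real.exp x := by
  rw [Real.exp_eq_exp_ℝ, NormedSpace.exp_eq_tsum_div]

lemma myNat_le_pow4 (n : ℕ) : ((n : ℝ)) ≤ 4 ^ n := by
  have h : (n : ℝ) ≤ 2 ^ n := by exact_mod_cast (Nat.lt_two_pow_self (n := n)).le
  refine h.trans ?_
  exact pow_le_pow_left₀ (by norm_num) (by norm_num) n

lemma mySq_le_pow4 (n : ℕ) : ((n : ℝ)) ^ 2 ≤ 4 ^ n := by
  have h : (n : ℝ) ≤ 2 ^ n := by exact_mod_cast (Nat.lt_two_pow_self (n := n)).le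
  calc ((n : ℝ)) ^ 2 ≤ ((2:ℝ) ^ n) ^ 2 := by
        exact pow_le_pow_left₀ (Nat.cast_nonneg n) h 2
    _ = 4 ^ n := by rw [← pow_mul, mul_comm, pow_mul]; norm_num

lemma mySummable1 (x : ℝ) (hx : 0 ≤ x) :
    Summable (fun n : ℕ => (n : ℝ) * x ^ n / n.factorial) := by
  have hle : ∀ n : ℕ, (n : ℝ) * x ^ n / n.factorial ≤ (4 * x) ^ n / n.factorial := by
    intro n
    rw [mul_pow]
    gcongr
    exact myNat_le_pow4 n
  exact Summable.of_nonneg_of_le (fun n => by positivity) hle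
    (Real.summable_pow_div_factorial (4 * x))

lemma mySummable2 (x : ℝ) (hx : 0 ≤ x) :
    Summable (fun n : ℕ => (n : ℝ) ^ 2 * x ^ n / n.factorial) := by
  have hle : ∀ n : ℕ, (n : ℝ) ^ 2 * x ^ n / n.factorial ≤ (4 * x) ^ n / n.factorial := by
    intro n
    rw [mul_pow]
    gcongr
    exact mySq_le_pow4 n
  exact Summable.of_nonneg_of_le (fun n => by positivity) hle
    (Real.summable_pow_div_factorial (4 * x))

lemma myTsum1 (x : ℝ) (hx : 0 ≤ x) :
    (∑' n : ℕ, (n : ℝ) * x ^ n / n.factorial) = x * Real.exp x := by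
  rw [Summable.tsum_eq_zero_add (mySummable1 x hx)]
  have h : ∀ n : ℕ, ((n + 1 : ℕ) : ℝ) * x ^ (n + 1) / ((n + 1).factorial : ℝ)
      = x * (x ^ n / n.factorial) := by
    intro n
    rw [Nat.factorial_succ]
    have h1 : ((n.factorial : ℝ)) ≠ 0 := by positivity
    have h0 : ((n : ℝ) + 1) ≠ 0 := by positivity
    push_cast
    field_simp
    ring
  simp only [h]
  rw [tsum_mul_left, myExp_tsum]
  simp

lemma myTsum2 (x : ℝ) (hx : 0 ≤ x) :
    (∑' n : ℕ, (n : ℝ) ^ 2 * x ^ n / n.factorial) = (x ^ 2 + x) * Real.exp x := by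
  rw [Summable.tsum_eq_zero_add (mySummable2 x hx)]
  have h : ∀ n : ℕ, ((n + 1 : ℕ) : ℝ) ^ 2 * x ^ (n + 1) / ((n + 1).factorial : ℝ)
      = x * ((n : ℝ) * x ^ n / n.factorial + x ^ n / n.factorial) := by
    intro n
    rw [Nat.factorial_succ]
    have h1 : ((n.factorial : ℝ)) ≠ 0 := by positivity
    have h0 : ((n : ℝ) + 1) ≠ 0 := by positivity
    push_cast
    field_simp
    ring
  simp only [h]
  rw [tsum_mul_left, Summable.tsum_add (mySummable1 x hx) (Real.summable_pow_div_factorial x),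
    myTsum1 x hx, myExp_tsum]
  push_cast
  ring

lemma mySummableCentered (x l : ℝ) (hx : 0 ≤ x) :
    Summable (fun n : ℕ => ((n : ℝ) - l) ^ 2 * x ^ n / n.factorial) := by
  have h : ∀ n : ℕ, ((n : ℝ) - l) ^ 2 * x ^ n / n.factorial
      = (n : ℝ) ^ 2 * x ^ n / n.factorial - (2 * l) * ((n : ℝ) * x ^ n / n.factorial)
        + l ^ 2 * (x ^ n / n.factorial) := by
    intro n; field_simp; ring
  simp only [h]
  exact (((mySummable2 x hx).sub ((mySummable1 x hx).mul_left (2 * l))).add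
    ((Real.summable_pow_div_factorial x).mul_left (l ^ 2)))

lemma myTsumCentered (l : ℝ) (hl : 0 < l) :
    (∑' n : ℕ, ((n : ℝ) - l) ^ 2 * l ^ n / n.factorial) = l * Real.exp l := by
  have h : ∀ n : ℕ, ((n : ℝ) - l) ^ 2 * l ^ n / n.factorial
      = (n : ℝ) ^ 2 * l ^ n / n.factorial - (2 * l) * ((n : ℝ) * l ^ n / n.factorial)
        + l ^ 2 * (l ^ n / n.factorial) := by
    intro n; field_simp; ring
  simp only [h]
  rw [Summable.tsum_add (((mySummable2 l hl.le).sub ((mySummable1 l hl.le).mul_left (2 * l))))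
      ((Real.summable_pow_div_factorial l).mul_left (l ^ 2)),
    Summable.tsum_sub (mySummable2 l hl.le) ((mySummable1 l hl.le).mul_left (2 * l)),
    tsum_mul_left, tsum_mul_left, myTsum1 l hl.le, myTsum2 l hl.le, myExp_tsum]
  ring

lemma mySummableInvSq (x : ℝ) (hx : 0 ≤ x) :
    Summable (fun n : ℕ => x ^ n / n.factorial / (n : ℝ) ^ 2) := by
  have hle : ∀ n : ℕ, x ^ n / n.factorial / (n : ℝ) ^ 2 ≤ x ^ n / n.factorial := by
    intro n
    rcases Nat.eq_zero_or_pos n with h | h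
    · subst h; simp
    · have h1 : (1 : ℝ) ≤ ((n : ℝ)) ^ 2 := by
        have : (1 : ℝ) ≤ (n : ℝ) := by exact_mod_cast h
        nlinarith
      exact div_le_self (by positivity) h1
  exact Summable.of_nonneg_of_le (fun n => by positivity) hle
    (Real.summable_pow_div_factorial x)

lemma myTsumInvSq (x : ℝ) (hx : 0 < x) :
    (∑' n : ℕ, x ^ n / n.factorial / (n : ℝ) ^ 2) ≤ 6 * Real.exp x / x ^ 2 := by
  have hshift : Summable (fun n : ℕ => x ^ (n + 2) / ((n + 2).factorial : ℝ)) :=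
    (Real.summable_pow_div_factorial x).comp_injective (add_left_injective 2)
  have hstep : (∑' n : ℕ, x ^ (n + 2) / ((n + 2).factorial : ℝ)) ≤ Real.exp x := by
    rw [← myExp_tsum x]
    exact Summable.tsum_le_tsum_of_inj (fun n => n + 2) (add_left_injective 2)
      (fun c _ => by positivity) (fun n => le_refl _) hshift
      (Real.summable_pow_div_factorial x)
  have hle : ∀ n : ℕ, x ^ n / n.factorial / (n : ℝ) ^ 2
      ≤ 6 / x ^ 2 * (x ^ (n + 2) / ((n + 2).factorial : ℝ)) := by
    intro n
    rcases Nat.eq_zero_or_pos n with h | h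
    · subst h; simp; positivity
    · have hn : (1 : ℝ) ≤ (n : ℝ) := by exact_mod_cast h
      have hfact : ((n + 2).factorial : ℝ) = (((n : ℝ) + 2) * ((n : ℝ) + 1)) * n.factorial := by
        rw [show n + 2 = (n + 1) + 1 from rfl, Nat.factorial_succ, Nat.factorial_succ]
        push_cast; ring
      have h1 : (0 : ℝ) < n.factorial := by positivity
      have hrw : 6 / x ^ 2 * (x ^ (n + 2) / ((n + 2).factorial : ℝ))
          = x ^ n * (6 / ((((n : ℝ) + 2) * ((n : ℝ) + 1)) * n.factorial)) := by
        rw [pow_add, hfact]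
        field_simp
      have hlhs : x ^ n / n.factorial / (n : ℝ) ^ 2
          = x ^ n * (1 / ((n.factorial : ℝ) * (n : ℝ) ^ 2)) := by
        field_simp
      rw [hrw, hlhs]
      apply mul_le_mul_of_nonneg_left _ (pow_nonneg hx.le n)
      rw [div_le_div_iff₀ (by positivity) (by positivity)]
      have key : ((n : ℝ) + 2) * ((n : ℝ) + 1) ≤ 6 * (n : ℝ) ^ 2 := by nlinarith
      nlinarith [mul_le_mul_of_nonneg_left key h1.le]
  calc (∑' n : ℕ, x ^ n / n.factorial / (n : ℝ) ^ 2)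
      ≤ ∑' n : ℕ, 6 / x ^ 2 * (x ^ (n + 2) / ((n + 2).factorial : ℝ)) :=
        Summable.tsum_le_tsum hle (mySummableInvSq x hx.le) (hshift.mul_left _)
    _ = 6 / x ^ 2 * ∑' n : ℕ, x ^ (n + 2) / ((n + 2).factorial : ℝ) := tsum_mul_left
    _ ≤ 6 / x ^ 2 * Real.exp x := by
        apply mul_le_mul_of_nonneg_left hstep (by positivity)
    _ = 6 * Real.exp x / x ^ 2 := by ring

lemma myRpowAux (x : ℝ) (hx : 0 < x) (α : ℝ) (h1 : -2 ≤ α) (h2 : α ≤ 1) :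
    x ^ α ≤ 1 + x + (x ^ 2)⁻¹ := by
  have hx2 : (0:ℝ) < (x ^ 2)⁻¹ := by positivity
  rcases le_total 1 x with hx1 | hx1
  · rcases le_total 0 α with ha | ha
    · have h := Real.rpow_le_rpow_of_exponent_le hx1 h2
      rw [Real.rpow_one] at h; linarith
    · have h := Real.rpow_le_rpow_of_exponent_le hx1 ha
      rw [Real.rpow_zero] at h; linarith [hx.le]
  · rcases le_total 0 α with ha | ha
    · have h := Real.rpow_le_one hx.le hx1 ha
      linarith [hx.le]
    · have h3 := Real.rpow_le_rpow_of_exponent_ge hx hx1 h1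
      have h4 : x ^ (-2:ℝ) = (x ^ 2)⁻¹ := by
        rw [show (-2:ℝ) = -((2:ℕ):ℝ) by norm_num, Real.rpow_neg hx.le, Real.rpow_natCast]
      rw [h4] at h3; linarith [hx.le]

/-- There is a universal constant `c > 0` such that for all `λ > 0` and all real `p` with
`−1 ≤ p ≤ 1/2`: `Σ_{n=1}^∞ |n − λ| n^p e^{−λ} λ^n / n! ≤ c · min(λ, λ^{1/2+p})`, i.e. if
`N` is Poisson with mean `λ` then `E(|N − λ| N^p 1_{N > 0}) ≤ c min(λ, λ^{1/2+p})`. -/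
theorem poisson_centered_moment_bound :
    ∃ c : ℝ, 0 < c ∧ ∀ (l : ℝ), 0 < l → ∀ (p : ℝ), -1 ≤ p → p ≤ 1 / 2 →
      (∑' n : ℕ, if 1 ≤ n then
          |(n : ℝ) - l| * (n : ℝ) ^ p * Real.exp (-l) * l ^ n / (n.factorial : ℝ) else 0)
        ≤ c * min l (l ^ (1 / 2 + p)) := by
  refine ⟨5, by norm_num, fun l hl p hp1 hp2 => ?_⟩
  have hexp : Real.exp (-l) * Real.exp l = 1 := by
    rw [← Real.exp_add]; simp
  have hfac : ∀ n : ℕ, (0:ℝ) < n.factorial := fun n => by positivity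
  set F : ℕ → ℝ := fun n => if 1 ≤ n then
      |(n : ℝ) - l| * (n : ℝ) ^ p * Real.exp (-l) * l ^ n / (n.factorial : ℝ) else 0 with hFdef
  have hF0 : ∀ n, 0 ≤ F n := by
    intro n
    rw [hFdef]
    dsimp only
    split
    · positivity
    · exact le_refl 0
  rcases le_or_gt l 1 with hl1 | hl1
  · -- small l : min = l
    have hmin : min l (l ^ (1/2 + p)) = l := by
      apply min_eq_left
      calc l = l ^ (1:ℝ) := (Real.rpow_one l).symm
        _ ≤ l ^ (1/2 + p) := Real.rpow_le_rpow_of_exponent_ge hl hl1 (by linarith)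
    rw [hmin]
    set G : ℕ → ℝ := fun n => Real.exp (-l) * ((n:ℝ) ^ 2 * l ^ n / n.factorial) with hGdef
    have hGs : Summable G := (mySummable2 l hl.le).mul_left _
    have hFle : ∀ n, F n ≤ G n := by
      intro n
      by_cases hn : 1 ≤ n
      · rw [hFdef, hGdef]
        dsimp only
        rw [if_pos hn]
        have hn1 : (1:ℝ) ≤ (n:ℝ) := by exact_mod_cast hn
        have habs : |(n:ℝ) - l| ≤ (n:ℝ) := by
          rw [abs_le]; constructor <;> nlinarith
        have hrp : (n:ℝ) ^ p ≤ (n:ℝ) := by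
          calc (n:ℝ) ^ p ≤ (n:ℝ) ^ (1:ℝ) := Real.rpow_le_rpow_of_exponent_le hn1 (by linarith)
            _ = (n:ℝ) := Real.rpow_one _
        calc |(n:ℝ) - l| * (n:ℝ) ^ p * Real.exp (-l) * l ^ n / (n.factorial : ℝ)
            ≤ (n:ℝ) * (n:ℝ) * Real.exp (-l) * l ^ n / (n.factorial : ℝ) := by
              gcongr
          _ = Real.exp (-l) * ((n:ℝ) ^ 2 * l ^ n / n.factorial) := by ring
      · rw [hFdef, hGdef]
        dsimp only
        rw [if_neg hn]
        positivity
    have hFs : Summable F := Summable.of_nonneg_of_le hF0 hFle hGs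
    calc (∑' n, F n) ≤ ∑' n, G n := Summable.tsum_le_tsum hFle hFs hGs
      _ = Real.exp (-l) * ((l ^ 2 + l) * Real.exp l) := by
          rw [hGdef, tsum_mul_left, myTsum2 l hl.le]
      _ = l ^ 2 + l := by
          rw [show Real.exp (-l) * ((l ^ 2 + l) * Real.exp l)
            = (Real.exp (-l) * Real.exp l) * (l ^ 2 + l) from by ring, hexp, one_mul]
      _ ≤ 5 * l := by nlinarith
  · -- large l : min = l ^ (1/2 + p)
    have hmin : min l (l ^ (1/2 + p)) = l ^ (1/2 + p) := by
      apply min_eq_right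
      calc l ^ (1/2 + p) ≤ l ^ (1:ℝ) :=
            Real.rpow_le_rpow_of_exponent_le hl1.le (by linarith)
        _ = l := Real.rpow_one _
    rw [hmin]
    have hLpos : (0:ℝ) < l ^ (1/2 + p) := Real.rpow_pos_of_pos hl _
    have hApos : (0:ℝ) < l ^ (p - 1/2) := Real.rpow_pos_of_pos hl _
    have htpos : (0:ℝ) < l ^ (1/2 - p) := Real.rpow_pos_of_pos hl _
    set E := Real.exp (-l) with hEdef
    have hEpos : 0 < E := Real.exp_pos _
    set A := E * l ^ (p - 1/2) / 2 with hAdef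
    set B := E * l ^ (1/2 + p) / 2 with hBdef
    have hApos' : 0 < A := by positivity
    have hBpos' : 0 < B := by positivity
    set G : ℕ → ℝ := fun n =>
      A * (((n:ℝ) - l) ^ 2 * l ^ n / n.factorial) + B * (l ^ n / n.factorial)
        + (B / l) * ((n:ℝ) * l ^ n / n.factorial)
        + (B * l ^ 2) * (l ^ n / n.factorial / (n:ℝ) ^ 2) with hGdef
    have t1 := (mySummableCentered l l hl.le).mul_left A
    have t2 := (Real.summable_pow_div_factorial l).mul_left B
    have t3 := (mySummable1 l hl.le).mul_left (B / l)
    have t4 := (mySummableInvSq l hl.le).mul_left (B * l ^ 2)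
    have hGs : Summable G := (((t1.add t2).add t3).add t4)
    have hFle : ∀ n, F n ≤ G n := by
      intro n
      by_cases hn : 1 ≤ n
      · have hn1 : (1:ℝ) ≤ (n:ℝ) := by exact_mod_cast hn
        have hnp : (0:ℝ) < (n:ℝ) := by linarith
        have hnfne : ((n.factorial : ℝ)) ≠ 0 := (hfac n).ne'
        -- step 1 : AM-GM
        have key1 : |(n:ℝ) - l| * (n:ℝ) ^ p
            ≤ (((n:ℝ) - l) ^ 2 * l ^ (p - 1/2) + l ^ (1/2 - p) * ((n:ℝ) ^ p) ^ 2) / 2 := by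
          set t := l ^ (1/2 - p) with htdef
          have htinv : t * l ^ (p - 1/2) = 1 := by
            rw [htdef, ← Real.rpow_add hl, show 1/2 - p + (p - 1/2) = 0 from by ring,
              Real.rpow_zero]
          have h2 : |(n:ℝ) - l| * (n:ℝ) ^ p * (2 * t)
              ≤ ((n:ℝ) - l) ^ 2 + t ^ 2 * ((n:ℝ) ^ p) ^ 2 := by
            nlinarith [sq_nonneg (|(n:ℝ) - l| - t * (n:ℝ) ^ p), sq_abs ((n:ℝ) - l)]
          have hrw : |(n:ℝ) - l| * (n:ℝ) ^ p
              = |(n:ℝ) - l| * (n:ℝ) ^ p * (2 * t) / (2 * t) := by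
            field_simp
          rw [hrw]
          calc |(n:ℝ) - l| * (n:ℝ) ^ p * (2 * t) / (2 * t)
              ≤ (((n:ℝ) - l) ^ 2 + t ^ 2 * ((n:ℝ) ^ p) ^ 2) / (2 * t) := by gcongr
            _ = (((n:ℝ) - l) ^ 2 * l ^ (p - 1/2) + t * ((n:ℝ) ^ p) ^ 2) / 2 := by
                rw [div_eq_div_iff (by positivity) (by positivity)]
                linear_combination (-2 * ((n:ℝ) - l) ^ 2) * htinv
        -- step 2 : bound (n^p)^2
        have key2 : ((n:ℝ) ^ p) ^ 2 = (n:ℝ) ^ (p + p) := by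
          rw [pow_two, ← Real.rpow_add hnp]
        have key3 : (n:ℝ) ^ (p + p)
            ≤ l ^ (p + p) * (1 + (n:ℝ) / l + l ^ 2 / (n:ℝ) ^ 2) := by
          have hxq : (0:ℝ) < (n:ℝ) / l := by positivity
          have haux2 : (n:ℝ) ^ (p + p) / l ^ (p + p)
              ≤ 1 + (n:ℝ) / l + l ^ 2 / (n:ℝ) ^ 2 := by
            rw [← Real.div_rpow (Nat.cast_nonneg n) hl.le]
            calc ((n:ℝ) / l) ^ (p + p)
                ≤ 1 + (n:ℝ) / l + (((n:ℝ) / l) ^ 2)⁻¹ :=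
                  myRpowAux _ hxq _ (by linarith) (by linarith)
              _ = 1 + (n:ℝ) / l + l ^ 2 / (n:ℝ) ^ 2 := by rw [div_pow, inv_div]
          have := (div_le_iff₀ (Real.rpow_pos_of_pos hl (p + p))).mp haux2
          rw [mul_comm]
          exact this
        have key4 : l ^ (1/2 - p) * l ^ (p + p) = l ^ (1/2 + p) := by
          rw [← Real.rpow_add hl, show 1/2 - p + (p + p) = 1/2 + p from by ring]
        have hkey : |(n:ℝ) - l| * (n:ℝ) ^ p
            ≤ (((n:ℝ) - l) ^ 2 * l ^ (p - 1/2)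
              + l ^ (1/2 + p) * (1 + (n:ℝ) / l + l ^ 2 / (n:ℝ) ^ 2)) / 2 := by
          refine key1.trans ?_
          gcongr (((n:ℝ) - l) ^ 2 * l ^ (p - 1/2) + ?_) / 2
          calc l ^ (1/2 - p) * ((n:ℝ) ^ p) ^ 2
              = l ^ (1/2 - p) * (n:ℝ) ^ (p + p) := by rw [key2]
            _ ≤ l ^ (1/2 - p) * (l ^ (p + p) * (1 + (n:ℝ) / l + l ^ 2 / (n:ℝ) ^ 2)) :=
                mul_le_mul_of_nonneg_left key3 htpos.le
            _ = l ^ (1/2 + p) * (1 + (n:ℝ) / l + l ^ 2 / (n:ℝ) ^ 2) := by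
                rw [← mul_assoc, key4]
        -- assemble
        have hw : (0:ℝ) ≤ E * l ^ n / n.factorial := by positivity
        have hFn : F n = (|(n:ℝ) - l| * (n:ℝ) ^ p) * (E * l ^ n / n.factorial) := by
          rw [hFdef]; dsimp only; rw [if_pos hn, hEdef]; ring
        have hGn : (((n:ℝ) - l) ^ 2 * l ^ (p - 1/2)
              + l ^ (1/2 + p) * (1 + (n:ℝ) / l + l ^ 2 / (n:ℝ) ^ 2)) / 2
              * (E * l ^ n / n.factorial) = G n := by
          rw [hGdef]; dsimp only; rw [hAdef, hBdef]
          have hn2 : ((n:ℝ)) ^ 2 ≠ 0 := by positivity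
          field_simp
          ring
        rw [hFn, ← hGn]
        exact mul_le_mul_of_nonneg_right hkey hw
      · rw [hFdef, hGdef]
        dsimp only
        rw [if_neg hn]
        positivity
    have hFs : Summable F := Summable.of_nonneg_of_le hF0 hFle hGs
    have hsum4 := myTsumInvSq l hl
    calc (∑' n, F n) ≤ ∑' n, G n := Summable.tsum_le_tsum hFle hFs hGs
      _ = A * (l * Real.exp l) + B * Real.exp l + (B / l) * (l * Real.exp l)
          + (B * l ^ 2) * (∑' n : ℕ, l ^ n / n.factorial / (n:ℝ) ^ 2) := by
          rw [hGdef]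
          rw [Summable.tsum_add ((t1.add t2).add t3) t4, Summable.tsum_add (t1.add t2) t3, Summable.tsum_add t1 t2,
            tsum_mul_left, tsum_mul_left, tsum_mul_left, tsum_mul_left,
            myTsumCentered l hl, myTsum1 l hl.le, myExp_tsum]
      _ ≤ A * (l * Real.exp l) + B * Real.exp l + (B / l) * (l * Real.exp l)
          + (B * l ^ 2) * (6 * Real.exp l / l ^ 2) := by
          gcongr
      _ ≤ 5 * l ^ (1/2 + p) := by
          have e1 : A * (l * Real.exp l) = l ^ (1/2 + p) / 2 := by
            have hAl : l ^ (p - 1/2) * l = l ^ (1/2 + p) := by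
              have h := Real.rpow_add hl (p - 1/2) 1
              rw [Real.rpow_one] at h
              rw [← h, show p - 1/2 + 1 = 1/2 + p from by ring]
            calc A * (l * Real.exp l) = (E * Real.exp l) * (l ^ (p - 1/2) * l) / 2 := by
                  rw [hAdef]; ring
              _ = l ^ (1/2 + p) / 2 := by rw [hEdef, hexp, hAl, one_mul]
          have e2 : B * Real.exp l = l ^ (1/2 + p) / 2 := by
            calc B * Real.exp l = (E * Real.exp l) * l ^ (1/2 + p) / 2 := by
                  rw [hBdef]; ring
              _ = l ^ (1/2 + p) / 2 := by rw [hEdef, hexp, one_mul]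
          have e3 : (B / l) * (l * Real.exp l) = l ^ (1/2 + p) / 2 := by
            have : (B / l) * (l * Real.exp l) = B * Real.exp l := by
              field_simp
            rw [this, e2]
          have e4 : (B * l ^ 2) * (6 * Real.exp l / l ^ 2) = 3 * l ^ (1/2 + p) := by
            have : (B * l ^ 2) * (6 * Real.exp l / l ^ 2) = 6 * (B * Real.exp l) := by
              field_simp
            rw [this, e2]; ring
          rw [e1, e2, e3, e4]
          linarith [hLpos.le]
end

section
/- Let b, γ, t > 0 and z > 0, and let X be a nonnegative random variable on a probability space whose Laplace transform satisfies E(e^{−λ X}) = (1 + λ γ t)^{−b/γ} exp( −z λ / (1 + λ γ t) ) for all real λ > −(γ t)^{-1}. Then: (a) for all w > z, P(X ≥ w) ≤ (w/z)^{b/(2γ)} exp( −(√z − √w)² / (γ t) ); and (b) for all 0 ≤ w ≤ z, P(X ≤ w) ≤ (w/z)^{b/(2γ)} exp( −(√z − √w)² / (γ t) ). -/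
open MeasureTheory

private lemma chernoff_aux {Ω : Type*} [MeasurableSpace Ω] (μ : Measure Ω)
    [IsProbabilityMeasure μ]
    (f : Ω → ℝ) (c : ℝ) (A : Set Ω) (hA : MeasurableSet A)
    (h : ∀ ω ∈ A, c ≤ f ω) (hI : Integrable f μ) (hf0 : ∀ ω, 0 ≤ f ω) :
    c * (μ A).toReal ≤ ∫ ω, f ω ∂μ := by
  calc c * (μ A).toReal = ∫ _ω in A, c ∂μ := by
        rw [setIntegral_const, smul_eq_mul, mul_comm]
        rfl
    _ ≤ ∫ ω in A, f ω ∂μ := by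
        exact setIntegral_mono_on (integrableOn_const (measure_lt_top μ A).ne)
          hI.integrableOn hA h
    _ ≤ ∫ ω, f ω ∂μ := setIntegral_le_integral hI (Filter.Eventually.of_forall hf0)

private lemma alg_aux (a c gt : ℝ) (ha : 0 < a) (hc : 0 < c) (hgt : 0 < gt) :
    ((a / c - 1) / gt) * c ^ 2 + (-(a ^ 2) * ((a / c - 1) / gt) / (a / c))
      = -(a - c) ^ 2 / gt := by
  field_simp
  ring

/-- Let `b, γ, t > 0` and `z > 0`, and let `X` be a nonnegative random variable whose
Laplace transform satisfies
`E(e^{−λX}) = (1 + λγt)^{−b/γ} exp(−zλ/(1 + λγt))` for all `λ > −(γt)⁻¹`. Then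
(a) for all `w > z`, `P(X ≥ w) ≤ (w/z)^{b/(2γ)} exp(−(√z − √w)²/(γt))`; and
(b) for all `0 ≤ w ≤ z`, `P(X ≤ w) ≤ (w/z)^{b/(2γ)} exp(−(√z − √w)²/(γt))`. -/
theorem feller_branching_tail_bounds
    {Ω : Type*} [MeasurableSpace Ω] (μ : Measure Ω) [IsProbabilityMeasure μ]
    (b γ t z : ℝ) (hb : 0 < b) (hγ : 0 < γ) (ht : 0 < t) (hz : 0 < z)
    (X : Ω → ℝ) (hXm : Measurable X) (hX0 : ∀ ω, 0 ≤ X ω)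
    (hLaplace : ∀ l : ℝ, -(γ * t)⁻¹ < l →
      (∫ ω, Real.exp (-l * X ω) ∂μ) =
        (1 + l * γ * t) ^ (-(b / γ)) * Real.exp (-z * l / (1 + l * γ * t))) :
    (∀ w : ℝ, z < w →
      (μ {ω | w ≤ X ω}).toReal
        ≤ (w / z) ^ (b / (2 * γ)) * Real.exp (-(Real.sqrt z - Real.sqrt w) ^ 2 / (γ * t))) ∧
    (∀ w : ℝ, 0 ≤ w → w ≤ z →
      (μ {ω | X ω ≤ w}).toReal
        ≤ (w / z) ^ (b / (2 * γ)) * Real.exp (-(Real.sqrt z - Real.sqrt w) ^ 2 / (γ * t))) := by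
  have hgt : 0 < γ * t := mul_pos hγ ht
  have hpos : ∀ l : ℝ, -(γ * t)⁻¹ < l → 0 < 1 + l * γ * t := by
    intro l hl
    have h1 : (γ * t)⁻¹ * (γ * t) = 1 := inv_mul_cancel₀ (ne_of_gt hgt)
    nlinarith [mul_lt_mul_of_pos_right hl hgt]
  have hInt : ∀ l : ℝ, -(γ * t)⁻¹ < l → Integrable (fun ω => Real.exp (-l * X ω)) μ := by
    intro l hl
    by_contra hni
    have h0 := hLaplace l hl
    rw [integral_undef hni] at h0
    have : 0 < (1 + l * γ * t) ^ (-(b / γ)) * Real.exp (-z * l / (1 + l * γ * t)) := by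
      have := hpos l hl
      positivity
    linarith [this, h0.ge]
  -- main quantitative bound, for any 0 < w and appropriate event
  have key : ∀ w : ℝ, 0 < w → ∀ A : Set Ω, MeasurableSet A →
      (∀ ω ∈ A, Real.exp (-((Real.sqrt (z / w) - 1) / (γ * t)) * w)
        ≤ Real.exp (-((Real.sqrt (z / w) - 1) / (γ * t)) * X ω)) →
      (μ A).toReal
        ≤ (w / z) ^ (b / (2 * γ)) * Real.exp (-(Real.sqrt z - Real.sqrt w) ^ 2 / (γ * t)) := by
    intro w hw A hA hAbd
    set s : ℝ := Real.sqrt (z / w) with hs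
    set l : ℝ := (s - 1) / (γ * t) with hldef
    have hzw : 0 < z / w := div_pos hz hw
    have hspos : 0 < s := Real.sqrt_pos.2 hzw
    have h1l : 1 + l * γ * t = s := by
      rw [hldef, mul_assoc, div_mul_cancel₀ _ hgt.ne']
      ring
    have hl : -(γ * t)⁻¹ < l := by
      rw [← mul_lt_mul_iff_of_pos_right hgt]
      have h1 : -(γ * t)⁻¹ * (γ * t) = -1 := by field_simp
      have h2 : l * (γ * t) = s - 1 := by rw [hldef, div_mul_cancel₀ _ hgt.ne']
      rw [h1, h2]
      linarith
    have hI := hInt l hl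
    have hmain := chernoff_aux μ (fun ω => Real.exp (-l * X ω)) (Real.exp (-l * w)) A hA
      hAbd hI (fun ω => (Real.exp_pos _).le)
    rw [hLaplace l hl, h1l] at hmain
    have hμ : (μ A).toReal ≤ Real.exp (l * w) * (s ^ (-(b / γ)) * Real.exp (-z * l / s)) :=
      calc (μ A).toReal = Real.exp (l * w) * (Real.exp (-l * w) * (μ A).toReal) := by
            rw [← mul_assoc, ← Real.exp_add]
            simp
        _ ≤ _ := mul_le_mul_of_nonneg_left hmain (Real.exp_pos _).le
    refine hμ.trans_eq ?_
    have hsz : (0:ℝ) < Real.sqrt z := Real.sqrt_pos.2 hz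
    have hsw : (0:ℝ) < Real.sqrt w := Real.sqrt_pos.2 hw
    have hzz : Real.sqrt z ^ 2 = z := Real.sq_sqrt hz.le
    have hww : Real.sqrt w ^ 2 = w := Real.sq_sqrt hw.le
    have hsdiv : s = Real.sqrt z / Real.sqrt w := by
      rw [hs, Real.sqrt_div hz.le]
    have hspow : s ^ (-(b / γ)) = (w / z) ^ (b / (2 * γ)) := by
      rw [hs, Real.sqrt_eq_rpow, ← Real.rpow_mul hzw.le]
      rw [show (1 / 2 : ℝ) * -(b / γ) = -(b / (2 * γ)) from by field_simp]
      rw [Real.rpow_neg hzw.le, ← Real.inv_rpow hzw.le, inv_div]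
    have hexp : l * w + -z * l / s = -(Real.sqrt z - Real.sqrt w) ^ 2 / (γ * t) := by
      rw [hldef, hsdiv]
      calc ((Real.sqrt z / Real.sqrt w - 1) / (γ * t)) * w
            + -z * ((Real.sqrt z / Real.sqrt w - 1) / (γ * t)) / (Real.sqrt z / Real.sqrt w)
          = ((Real.sqrt z / Real.sqrt w - 1) / (γ * t)) * Real.sqrt w ^ 2
            + (-(Real.sqrt z ^ 2) * ((Real.sqrt z / Real.sqrt w - 1) / (γ * t))
              / (Real.sqrt z / Real.sqrt w)) := by rw [hzz, hww]
        _ = _ := alg_aux _ _ _ hsz hsw hgt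
    calc Real.exp (l * w) * (s ^ (-(b / γ)) * Real.exp (-z * l / s))
        = s ^ (-(b / γ)) * (Real.exp (l * w) * Real.exp (-z * l / s)) := by ring
      _ = (w / z) ^ (b / (2 * γ)) * Real.exp (-(Real.sqrt z - Real.sqrt w) ^ 2 / (γ * t)) := by
          rw [← Real.exp_add, hexp, hspow]
  constructor
  · intro w hwz
    have hw : 0 < w := hz.trans hwz
    apply key w hw _ (measurableSet_le measurable_const hXm)
    intro ω hω
    simp only [Set.mem_setOf_eq] at hω
    have hl0 : (Real.sqrt (z / w) - 1) / (γ * t) ≤ 0 := by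
      apply div_nonpos_of_nonpos_of_nonneg _ hgt.le
      have h1 : Real.sqrt (z / w) ≤ 1 := by
        rw [show (1:ℝ) = Real.sqrt 1 by simp]
        exact Real.sqrt_le_sqrt (by rw [div_le_one hw]; linarith)
      linarith
    apply Real.exp_le_exp.2
    nlinarith [mul_nonneg (neg_nonneg.2 hl0) (sub_nonneg.2 hω)]
  · intro w hw0 hwz
    rcases eq_or_lt_of_le hw0 with h0 | hw
    · -- w = 0 case
      subst h0
      have hA : MeasurableSet {ω | X ω ≤ 0} := measurableSet_le hXm measurable_const
      have hbd : ∀ n : ℕ, (μ {ω | X ω ≤ 0}).toReal ≤ (1 + (n : ℝ) * γ * t) ^ (-(b / γ)) := by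
        intro n
        have hl : -(γ * t)⁻¹ < (n : ℝ) := by
          have : (0:ℝ) < (γ * t)⁻¹ := inv_pos.2 hgt
          have := Nat.cast_nonneg (α := ℝ) n
          linarith
        have hI := hInt (n : ℝ) hl
        have hch := chernoff_aux μ (fun ω => Real.exp (-(n : ℝ) * X ω)) 1 _ hA
          (fun ω hω => by
            simp only [Set.mem_setOf_eq] at hω
            have hx : X ω = 0 := le_antisymm hω (hX0 ω)
            simp [hx])
          hI (fun ω => (Real.exp_pos _).le)
        rw [one_mul, hLaplace _ hl] at hch
        have hpos' := hpos _ hl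
        have hexple : Real.exp (-z * (n : ℝ) / (1 + (n : ℝ) * γ * t)) ≤ 1 := by
          apply Real.exp_le_one_iff.2
          apply div_nonpos_of_nonpos_of_nonneg _ hpos'.le
          have := Nat.cast_nonneg (α := ℝ) n
          nlinarith
        calc (μ {ω | X ω ≤ 0}).toReal
            ≤ (1 + (n : ℝ) * γ * t) ^ (-(b / γ))
              * Real.exp (-z * (n : ℝ) / (1 + (n : ℝ) * γ * t)) := hch
          _ ≤ (1 + (n : ℝ) * γ * t) ^ (-(b / γ)) * 1 :=
              mul_le_mul_of_nonneg_left hexple (Real.rpow_nonneg hpos'.le _)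
          _ = _ := mul_one _
      have htend : Filter.Tendsto (fun n : ℕ => (1 + (n : ℝ) * γ * t) ^ (-(b / γ)))
          Filter.atTop (nhds 0) := by
        apply (tendsto_rpow_neg_atTop (div_pos hb hγ)).comp
        apply Filter.tendsto_atTop_add_const_left
        have h1 : Filter.Tendsto (fun n : ℕ => (n : ℝ) * (γ * t)) Filter.atTop Filter.atTop :=
          Filter.Tendsto.atTop_mul_const hgt tendsto_natCast_atTop_atTop
        simpa [mul_assoc] using h1
      have hle0 : (μ {ω | X ω ≤ 0}).toReal ≤ 0 := ge_of_tendsto' htend hbd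
      have hrhs : ((0:ℝ) / z) ^ (b / (2 * γ))
          * Real.exp (-(Real.sqrt z - Real.sqrt 0) ^ 2 / (γ * t)) = 0 := by
        rw [zero_div, Real.zero_rpow (by positivity), zero_mul]
      rw [hrhs]
      exact hle0
    · apply key w hw _ (measurableSet_le hXm measurable_const)
      intro ω hω
      simp only [Set.mem_setOf_eq] at hω
      have hl0 : 0 ≤ (Real.sqrt (z / w) - 1) / (γ * t) := by
        apply div_nonneg _ hgt.le
        have h1 : (1:ℝ) ≤ Real.sqrt (z / w) := by
          rw [show (1:ℝ) = Real.sqrt 1 by simp]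
          exact Real.sqrt_le_sqrt (by rw [le_div_iff₀ hw]; linarith)
        linarith
      apply Real.exp_le_exp.2
      nlinarith [mul_nonneg hl0 (sub_nonneg.2 hω)]
end
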